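/- arXiv:2510.16324 — 10 statements merged into one kernel-verified Lean document; each statement's English description precedes it below -/
import Mathlib

section
/- Assume conditions (H2), (H3) and (H4). For nonzero f ∈ V set top(f) := max{|𝐧| : π_𝐧(f) ≠ 0}. Then for every j ∈ {1,…,d} and every nonzero f ∈ V, one has T_j(f) ≠ 0 and top(T_j(f)) = top(f) + 1. In particular each operator T_j is injective on V. -/
/-!
Write `B N` for the span of the components of total degree `≤ N`; a vector lies in `B N` exactly
when all its components of degree `> N` vanish, so `top f` is the least `N` with `f ∈ B N`.
By (H2) and (H3) each `T j` raises degrees by at most one, so `T j f ∈ B (top f + 1)`.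
It remains to see `T j f ∉ B (top f)`: for `top f = N + 1` this is (H4) applied to
`f ∉ B N`, and for `top f = 0` the vector `f` lies in `C 𝟎`, so `T j f` is a nonzero element
of `C 𝐞_j` by (H2).
-/

open Submodule

/-- `π i` is the projection onto `C i` along the other summands of `M = ⨁ i, C i`. -/
structure IsDecompositionProjections {ι R M : Type*} [Semiring R] [AddCommMonoid M] [Module R M]
    (C : ι → Submodule R M) (π : ι → M →ₗ[R] M) : Prop where
  iSup_eq_top : iSup C = ⊤
  apply_of_mem : ∀ i, ∀ v ∈ C i, π i v = v
  apply_of_mem_ne : ∀ i j, i ≠ j → ∀ v ∈ C j, π i v = 0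

def degLE {ι R M : Type*} [Semiring R] [AddCommMonoid M] [Module R M]
    (C : ι → Submodule R M) (deg : ι → ℕ) (N : ℕ) : Submodule R M :=
  ⨆ (i) (_ : deg i ≤ N), C i

def supportDegrees {ι R M : Type*} [Semiring R] [AddCommMonoid M] [Module R M]
    (π : ι → M →ₗ[R] M) (deg : ι → ℕ) (f : M) : Set ℕ :=
  {s | ∃ i, deg i = s ∧ π i f ≠ 0}

section Degree

variable {ι R M : Type*} [Semiring R] [AddCommMonoid M] [Module R M]
  {C : ι → Submodule R M} {deg : ι → ℕ}

theorem le_degLE {i : ι} {N : ℕ} (h : deg i ≤ N) : C i ≤ degLE C deg N :=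
  le_iSup₂_of_le i h le_rfl

theorem degLE_mono : Monotone (degLE C deg) :=
  fun _ _ hNM => iSup₂_le fun _ hi => le_degLE (hi.trans hNM)

theorem apply_mem_degLE_succ {T : M →ₗ[R] M}
    (hT : ∀ i, ∀ v ∈ C i, T v ∈ degLE C deg (deg i + 1)) {N : ℕ} {f : M}
    (hf : f ∈ degLE C deg N) : T f ∈ degLE C deg (N + 1) := by
  have hle : degLE C deg N ≤ (degLE C deg (N + 1)).comap T :=
    iSup₂_le fun i hi v hv => degLE_mono (Nat.succ_le_succ hi) (hT i v hv)
  exact hle hf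

end Degree

namespace IsDecompositionProjections

variable {ι R M : Type*} [Semiring R] [AddCommMonoid M] [Module R M]
  {C : ι → Submodule R M} {π : ι → M →ₗ[R] M}

theorem exists_finsupp_apply_eq (h : IsDecompositionProjections C π) (f : M) :
    ∃ g : ι →₀ M, (∀ i, g i ∈ C i) ∧ (∀ i, π i f = g i) ∧
      (g.sum fun _ v => v) = f := by
  classical
  obtain ⟨g, hgC, rfl⟩ :=
    (mem_iSup_iff_exists_finsupp C f).mp (h.iSup_eq_top ▸ mem_top)
  refine ⟨g, hgC, fun i => ?_, rfl⟩
  rw [Finsupp.sum, map_sum, Finset.sum_eq_single i]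
  · exact h.apply_of_mem i _ (hgC i)
  · exact fun j _ hji => h.apply_of_mem_ne i j hji.symm _ (hgC j)
  · intro hi
    rw [Finsupp.notMem_support_iff.mp hi, map_zero]

theorem mem_biSup_iff (h : IsDecompositionProjections C π) (p : ι → Prop) {f : M} :
    f ∈ ⨆ (i) (_ : p i), C i ↔ ∀ i, ¬ p i → π i f = 0 := by
  constructor
  · intro hf i hi
    have hle : ⨆ (j) (_ : p j), C j ≤ LinearMap.ker (π i) :=
      iSup₂_le fun j hj v hv => h.apply_of_mem_ne i j (by rintro rfl; exact hi hj) v hv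
    exact hle hf
  · intro hf
    obtain ⟨g, hgC, hπg, rfl⟩ := h.exists_finsupp_apply_eq f
    refine sum_mem fun i _ => ?_
    by_cases hi : p i
    · exact mem_iSup_of_mem i (mem_iSup_of_mem hi (hgC i))
    · rw [← hπg i, hf i hi]
      exact zero_mem _

theorem exists_apply_ne_zero (h : IsDecompositionProjections C π) {f : M} (hf : f ≠ 0) :
    ∃ i, π i f ≠ 0 := by
  by_contra! hπf
  have hbot : f ∈ ⨆ (i : ι) (_ : False), C i := (h.mem_biSup_iff _).2 fun i _ => hπf i
  simp only [iSup_false, iSup_bot, mem_bot] at hbot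
  exact hf hbot

variable {deg : ι → ℕ}

theorem mem_degLE_iff (h : IsDecompositionProjections C π) {N : ℕ} {f : M} :
    f ∈ degLE C deg N ↔ N ∈ upperBounds (supportDegrees π deg f) := by
  rw [degLE, h.mem_biSup_iff]
  constructor
  · rintro hf _ ⟨i, rfl, hi⟩
    by_contra hiN
    exact hi (hf i hiN)
  · intro hf i hiN
    by_contra hi
    exact hiN (hf ⟨i, rfl, hi⟩)

theorem bddAbove_supportDegrees (h : IsDecompositionProjections C π) (f : M) :
    BddAbove (supportDegrees π deg f) := by
  obtain ⟨g, -, hπg, -⟩ := h.exists_finsupp_apply_eq f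
  refine ⟨g.support.sup deg, ?_⟩
  rintro _ ⟨i, rfl, hi⟩
  exact Finset.le_sup (Finsupp.mem_support_iff.mpr (hπg i ▸ hi))

theorem exists_isGreatest_supportDegrees (h : IsDecompositionProjections C π) {f : M}
    (hf : f ≠ 0) : ∃ t, IsGreatest (supportDegrees π deg f) t :=
  have ⟨i, hi⟩ := h.exists_apply_ne_zero hf
  (h.bddAbove_supportDegrees f).exists_isGreatest_of_nonempty ⟨deg i, i, rfl, hi⟩

theorem mem_degLE_of_isGreatest (h : IsDecompositionProjections C π) {f : M} {t : ℕ}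
    (ht : IsGreatest (supportDegrees π deg f) t) : f ∈ degLE C deg t :=
  h.mem_degLE_iff.2 ht.2

theorem notMem_degLE_of_isGreatest (h : IsDecompositionProjections C π) {f : M} {t N : ℕ}
    (ht : IsGreatest (supportDegrees π deg f) t) (hN : N < t) : f ∉ degLE C deg N :=
  fun hf => (h.mem_degLE_iff.1 hf ht.1).not_gt hN

theorem isGreatest_supportDegrees_succ (h : IsDecompositionProjections C π) {f : M} {N : ℕ}
    (hf : f ∈ degLE C deg (N + 1)) (hf' : f ∉ degLE C deg N) :
    IsGreatest (supportDegrees π deg f) (N + 1) := by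
  rw [h.mem_degLE_iff] at hf hf'
  simp only [mem_upperBounds, not_forall, not_le] at hf'
  obtain ⟨s, hs, hNs⟩ := hf'
  exact ⟨le_antisymm (hf hs) hNs ▸ hs, hf⟩

end IsDecompositionProjections

section MultiIndex

variable {R M : Type*} [Semiring R] [AddCommMonoid M] [Module R M] {d : ℕ}
  {C : (Fin d → ℕ) → Submodule R M}

theorem degLE_zero_le : degLE C (fun m => ∑ l, m l) 0 ≤ C 0 := by
  refine iSup₂_le fun m hm => ?_
  obtain rfl : m = 0 := funext fun l =>
    Finset.sum_eq_zero_iff.mp (Nat.le_zero.mp hm) l (Finset.mem_univ l)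
  exact le_rfl

theorem apply_mem_degLE_succ_of_tridiagonal {T : M →ₗ[R] M} {j : Fin d}
    (h0 : ∀ v ∈ C 0, T v ∈ C (Pi.single j 1))
    (hT : ∀ m, m ≠ 0 → ∀ v ∈ C m,
      T v ∈ (if m j = 0 then (⊥ : Submodule R M) else C (m - Pi.single j 1))
        ⊔ C m ⊔ C (m + Pi.single j 1)) :
    ∀ m, ∀ v ∈ C m, T v ∈ degLE C (fun m => ∑ l, m l) (∑ l, m l + 1) := by
  intro m v hv
  rcases eq_or_ne m 0 with rfl | hm
  · exact le_degLE (by simp) (h0 v hv)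
  refine SetLike.le_def.1 (sup_le (sup_le ?_ (le_degLE (Nat.le_succ _))) (le_degLE ?_))
    (hT m hm v hv)
  · split_ifs
    · exact bot_le
    · exact le_degLE ((Finset.sum_le_sum fun l _ => tsub_le_self).trans (Nat.le_succ _))
  · simp [Finset.sum_add_distrib]

theorem apply_notMem_degLE_zero {π : (Fin d → ℕ) → M →ₗ[R] M}
    (hπ : IsDecompositionProjections C π) {T : M →ₗ[R] M} {j : Fin d}
    (h0 : ∀ v ∈ C 0, T v ∈ C (Pi.single j 1)) (hinj : Set.InjOn T (C 0)) {f : M}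
    (hf : f ∈ degLE C (fun m => ∑ l, m l) 0) (hf0 : f ≠ 0) :
    T f ∉ degLE C (fun m => ∑ l, m l) 0 := by
  have hfC : f ∈ C 0 := degLE_zero_le hf
  have hTf : T f ≠ 0 := fun hTf =>
    hf0 (hinj hfC (zero_mem _) (hTf.trans (map_zero T).symm))
  intro hTf0
  have hle := hπ.mem_degLE_iff.1 hTf0
    ⟨Pi.single j 1, rfl, by rwa [hπ.apply_of_mem _ _ (h0 f hfC)]⟩
  simp at hle

end MultiIndex

theorem stmt_2_general
    (k : Type*) [Field k] (V : Type*) [AddCommGroup V] [Module k V]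
    (d : ℕ)
    (C : (Fin d → ℕ) → Submodule k V)
    (hC : DirectSum.IsInternal C)
    (π : (Fin d → ℕ) → (V →ₗ[k] V))
    (hπ_eq : ∀ m, ∀ v ∈ C m, π m v = v)
    (hπ_ne : ∀ m m', m ≠ m' → ∀ v ∈ C m', π m v = 0)
    (T : Fin d → Module.End k V)
    (B : ℕ → Submodule k V)
    (hB : ∀ N, B N = ⨆ (m : Fin d → ℕ) (_ : ∑ l, m l ≤ N), C m)
    -- (H2)
    (H2a : ∀ j, ∀ v ∈ C 0, T j v ∈ C (Pi.single j 1))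
    (H2b : ∀ j : Fin d, Set.InjOn (⇑(T j)) (C 0 : Set V))
    -- (H3)
    (H3 : ∀ m : Fin d → ℕ, m ≠ 0 → ∀ j : Fin d, ∀ v ∈ C m,
      T j v ∈ (if m j = 0 then (⊥ : Submodule k V) else C (m - Pi.single j 1))
        ⊔ C m ⊔ C (m + Pi.single j 1))
    -- (H4)
    (H4 : ∀ (j : Fin d) (N : ℕ), ∀ f ∈ B (N + 1), T j f ∈ B (N + 1) → f ∈ B N) :
    ∀ (j : Fin d) (f : V), f ≠ 0 →
      T j f ≠ 0 ∧
      ∀ t : ℕ,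
        IsGreatest {s : ℕ | ∃ m : Fin d → ℕ, (∑ l, m l) = s ∧ π m f ≠ 0} t →
        IsGreatest {s : ℕ | ∃ m : Fin d → ℕ, (∑ l, m l) = s ∧ π m (T j f) ≠ 0} (t + 1) := by
  have hπ : IsDecompositionProjections C π := ⟨hC.submodule_iSup_eq_top, hπ_eq, hπ_ne⟩
  obtain rfl : B = degLE C (fun m => ∑ l, m l) := funext hB
  intro j f hf
  have hstep : ∀ t, IsGreatest (supportDegrees π (fun m => ∑ l, m l) f) t →
      T j f ∈ degLE C (fun m => ∑ l, m l) (t + 1) ∧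
        T j f ∉ degLE C (fun m => ∑ l, m l) t := by
    intro t ht
    have hft := hπ.mem_degLE_of_isGreatest ht
    refine ⟨apply_mem_degLE_succ
      (apply_mem_degLE_succ_of_tridiagonal (H2a j) fun m hm => H3 m hm j) hft, ?_⟩
    cases t with
    | zero => exact apply_notMem_degLE_zero hπ (H2a j) (H2b j) hft hf
    | succ N =>
      exact fun hTf => hπ.notMem_degLE_of_isGreatest ht N.lt_succ_self (H4 j N f hft hTf)
  obtain ⟨t, ht⟩ := hπ.exists_isGreatest_supportDegrees hf
  exact ⟨fun hTf => (hstep t ht).2 (hTf ▸ zero_mem _),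
    fun t ht => hπ.isGreatest_supportDegrees_succ (hstep t ht).1 (hstep t ht).2⟩

/-- Under (H2)–(H4), for every `j` and every nonzero `f`,
`T j f ≠ 0` and `top (T j f) = top f + 1`, where `top f` is the greatest value
of `|𝐧|` with `π 𝐧 f ≠ 0` (expressed via `IsGreatest`). In particular every
`T j` is injective. -/
theorem stmt_2
    (k : Type*) [Field k] (V : Type*) [AddCommGroup V] [Module k V]
    (d : ℕ) (hd : 1 ≤ d)
    (C : (Fin d → ℕ) → Submodule k V)
    (hC : DirectSum.IsInternal C)
    (hCne : ∀ m, C m ≠ ⊥)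
    (π : (Fin d → ℕ) → (V →ₗ[k] V))
    (hπ_eq : ∀ m, ∀ v ∈ C m, π m v = v)
    (hπ_ne : ∀ m m', m ≠ m' → ∀ v ∈ C m', π m v = 0)
    (T : Fin d → Module.End k V)
    (hcomm : ∀ a b, Commute (T a) (T b))
    (B : ℕ → Submodule k V)
    (hB : ∀ N, B N = ⨆ (m : Fin d → ℕ) (_ : ∑ l, m l ≤ N), C m)
    -- (H2)
    (H2a : ∀ j, ∀ v ∈ C 0, T j v ∈ C (Pi.single j 1))
    (H2b : ∀ j : Fin d, Set.InjOn (⇑(T j)) (C 0 : Set V))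
    -- (H3)
    (H3 : ∀ m : Fin d → ℕ, m ≠ 0 → ∀ j : Fin d, ∀ v ∈ C m,
      T j v ∈ (if m j = 0 then (⊥ : Submodule k V) else C (m - Pi.single j 1))
        ⊔ C m ⊔ C (m + Pi.single j 1))
    -- (H4)
    (H4 : ∀ (j : Fin d) (N : ℕ), ∀ f ∈ B (N + 1), T j f ∈ B (N + 1) → f ∈ B N) :
    ∀ (j : Fin d) (f : V), f ≠ 0 →
      T j f ≠ 0 ∧
      ∀ t : ℕ,
        IsGreatest {s : ℕ | ∃ m : Fin d → ℕ, (∑ l, m l) = s ∧ π m f ≠ 0} t →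
        IsGreatest {s : ℕ | ∃ m : Fin d → ℕ, (∑ l, m l) = s ∧ π m (T j f) ≠ 0} (t + 1) :=
  stmt_2_general k V d C hC π hπ_eq hπ_ne T B hB H2a H2b H3 H4
end

section
/- Assume conditions (H2), (H3) and (H4). Then for all multi-indices 𝐢, 𝐣 ∈ ℕ^d, the restriction to C_𝐣 of the composite map π_{𝐢+𝐣} ∘ 𝐓^𝐢 is an injective k-linear map from C_𝐣 to C_{𝐢+𝐣}. -/
/-! Let `D N = filtrationBelow C N`, the sum of the `C m` with `|m| < N`; thus `B N = D (N + 1)`.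
By (H2) and (H3), each `T l` maps `D N` into `D (N + 1)` and sends `C m` into `C (m + 𝐞_l)`
modulo `D (|m| + 1)`; hence for `u ∈ C 𝐣` the vector `𝐓^𝐢 u` agrees with its component
`π (𝐢 + 𝐣) (𝐓^𝐢 u)` modulo `D (|𝐢| + |𝐣|)`. In the other direction, (H4), extended to `N = 0` by
the injectivity in (H2), says that `f ∈ D (N + 1)` and `T l f ∈ D (N + 1)` force `f ∈ D N`.
Iterating along `𝐢`, `𝐓^𝐢 u ∈ D (|𝐢| + |𝐣|)` forces `u ∈ D |𝐣|`, which meets `C 𝐣` only in `0`. -/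

open Finset

section MultiIndex

variable {ι : Type*}

theorem induction_add_single [Finite ι] [DecidableEq ι] {P : (ι → ℕ) → Prop} (zero : P 0)
    (add_single : ∀ i l, P i → P (i + Pi.single l 1)) (i : ι → ℕ) : P i := by
  suffices h : ∀ f g, P g → P (g + f) by simpa using h i 0 zero
  intro f
  induction f using Pi.single_induction with
  | zero => simp
  | add f f' hf hf' => exact fun g hg => add_assoc g f f' ▸ hf' _ (hf g hg)
  | single l m =>
    induction m with
    | zero => simp
    | succ m ih =>
      intro g hg
      rw [Pi.single_add, ← add_assoc]
      exact add_single _ l (ih g hg)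

theorem sum_add_single_one [Fintype ι] [DecidableEq ι] (m : ι → ℕ) (l : ι) :
    ∑ t, (m + Pi.single l 1 : ι → ℕ) t = ∑ t, m t + 1 := by
  simp [sum_add_distrib]

end MultiIndex

section Filtration

variable {k V ι : Type*} [Ring k] [AddCommGroup V] [Module k V] [Fintype ι]

variable (C : (ι → ℕ) → Submodule k V)

def filtrationBelow (N : ℕ) : Submodule k V :=
  ⨆ (m : ι → ℕ) (_ : ∑ t, m t < N), C m

variable {C}

theorem le_filtrationBelow {m : ι → ℕ} {N : ℕ} (h : ∑ t, m t < N) :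
    C m ≤ filtrationBelow C N :=
  le_iSup₂_of_le m h le_rfl

theorem filtrationBelow_mono : Monotone (filtrationBelow C) := fun _ _ hNM =>
  iSup₂_le fun _ hm => le_filtrationBelow (hm.trans_le hNM)

theorem filtrationBelow_succ (N : ℕ) :
    filtrationBelow C (N + 1) = ⨆ (m : ι → ℕ) (_ : ∑ t, m t ≤ N), C m := by
  simp only [filtrationBelow, Nat.lt_succ_iff]

theorem filtrationBelow_one_le : filtrationBelow C 1 ≤ C 0 :=
  iSup₂_le fun m hm => by
    obtain rfl : m = 0 := funext fun t => sum_eq_zero_iff.mp (Nat.lt_one_iff.mp hm) t (mem_univ t)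
    exact le_rfl

variable {π : (ι → ℕ) → V →ₗ[k] V}

theorem filtrationBelow_le_ker (hπ_ne : ∀ m m', m ≠ m' → ∀ v ∈ C m', π m v = 0)
    {m : ι → ℕ} {N : ℕ} (hN : N ≤ ∑ t, m t) : filtrationBelow C N ≤ LinearMap.ker (π m) :=
  iSup₂_le fun m' hm' v hv => hπ_ne m m' (by rintro rfl; omega) v hv

theorem proj_add_of_mem_filtrationBelow (hπ_eq : ∀ m, ∀ v ∈ C m, π m v = v)
    (hπ_ne : ∀ m m', m ≠ m' → ∀ v ∈ C m', π m v = 0) {m : ι → ℕ} {c b : V} (hc : c ∈ C m)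
    (hb : b ∈ filtrationBelow C (∑ t, m t)) : π m (c + b) = c := by
  rw [map_add, hπ_eq m c hc, filtrationBelow_le_ker hπ_ne le_rfl hb, add_zero]

theorem eq_zero_of_mem_filtrationBelow (hπ_eq : ∀ m, ∀ v ∈ C m, π m v = v)
    (hπ_ne : ∀ m m', m ≠ m' → ∀ v ∈ C m', π m v = 0) {m : ι → ℕ} {v : V} (hv : v ∈ C m)
    (hv' : v ∈ filtrationBelow C (∑ t, m t)) : v = 0 := by
  have h := proj_add_of_mem_filtrationBelow hπ_eq hπ_ne (zero_mem _) hv'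
  rwa [zero_add, hπ_eq m v hv] at h

end Filtration

section Operators

variable {k V ι : Type*} [Ring k] [AddCommGroup V] [Module k V] [Fintype ι] [DecidableEq ι]
  {C : (ι → ℕ) → Submodule k V} {T : ι → Module.End k V}

theorem apply_mem_sup_filtrationBelow (H2a : ∀ l, ∀ v ∈ C 0, T l v ∈ C (Pi.single l 1))
    (H3 : ∀ m : ι → ℕ, m ≠ 0 → ∀ l, ∀ v ∈ C m,
      T l v ∈ (if m l = 0 then (⊥ : Submodule k V) else C (m - Pi.single l 1))
        ⊔ C m ⊔ C (m + Pi.single l 1))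
    (l : ι) {m : ι → ℕ} {v : V} (hv : v ∈ C m) :
    T l v ∈ C (m + Pi.single l 1) ⊔ filtrationBelow C (∑ t, m t + 1) := by
  rcases eq_or_ne m 0 with rfl | hm
  · exact Submodule.mem_sup_left (by simpa using H2a l v hv)
  refine (sup_le (sup_le ?_ ?_) le_sup_left : _ ≤ C (m + Pi.single l 1) ⊔ _) (H3 m hm l v hv)
  · split_ifs
    · exact bot_le
    · exact le_sup_of_le_right <| le_filtrationBelow <|
        (sum_le_sum fun t _ => Nat.sub_le _ _).trans_lt (Nat.lt_succ_self _)
  · exact le_sup_of_le_right (le_filtrationBelow (Nat.lt_succ_self _))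

theorem mem_filtrationBelow_of_apply_mem {π : (ι → ℕ) → V →ₗ[k] V}
    (hπ_eq : ∀ m, ∀ v ∈ C m, π m v = v) (hπ_ne : ∀ m m', m ≠ m' → ∀ v ∈ C m', π m v = 0)
    (H2a : ∀ l, ∀ v ∈ C 0, T l v ∈ C (Pi.single l 1)) (H2b : ∀ l, Set.InjOn (T l) (C 0 : Set V))
    (H4 : ∀ l N, ∀ f ∈ filtrationBelow C (N + 2), T l f ∈ filtrationBelow C (N + 2) →
      f ∈ filtrationBelow C (N + 1))
    (l : ι) {N : ℕ} {f : V} (hf : f ∈ filtrationBelow C (N + 1))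
    (hTf : T l f ∈ filtrationBelow C (N + 1)) : f ∈ filtrationBelow C N := by
  cases N with
  | zero =>
    have hf0 : f ∈ C 0 := filtrationBelow_one_le hf
    have hTf0 : T l f = 0 :=
      eq_zero_of_mem_filtrationBelow hπ_eq hπ_ne (H2a l f hf0) (by simpa using hTf)
    rw [H2b l hf0 (zero_mem _) (hTf0.trans (map_zero _).symm)]
    exact zero_mem _
  | succ N => exact H4 l N f hf hTf

variable {TT : (ι → ℕ) → Module.End k V}
  (hraise : ∀ l m, ∀ v ∈ C m, T l v ∈ C (m + Pi.single l 1) ⊔ filtrationBelow C (∑ t, m t + 1))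
  (hTT0 : TT 0 = 1) (hTTs : ∀ i l, TT (i + Pi.single l 1) = T l * TT i)
include hraise

theorem apply_mem_filtrationBelow_succ (l : ι) {N : ℕ} {v : V}
    (hv : v ∈ filtrationBelow C N) : T l v ∈ filtrationBelow C (N + 1) := by
  suffices h : filtrationBelow C N ≤ (filtrationBelow C (N + 1)).comap (T l) from h hv
  refine iSup₂_le fun m hm w hw => ?_
  refine (sup_le (le_filtrationBelow ?_) (filtrationBelow_mono ?_) : _ ≤ filtrationBelow C (N + 1))
    (hraise l m w hw)
  · rw [sum_add_single_one]; omega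
  · omega

include hTT0 hTTs

theorem monomial_mem_filtrationBelow (i : ι → ℕ) {N : ℕ} {v : V}
    (hv : v ∈ filtrationBelow C N) : TT i v ∈ filtrationBelow C (N + ∑ t, i t) := by
  induction i using induction_add_single with
  | zero => simpa [hTT0] using hv
  | add_single i l ih =>
    rw [hTTs, sum_add_single_one, ← add_assoc]
    exact apply_mem_filtrationBelow_succ hraise l ih

theorem monomial_mem_sup_filtrationBelow (i : ι → ℕ) {j : ι → ℕ} {u : V} (hu : u ∈ C j) :
    TT i u ∈ C (i + j) ⊔ filtrationBelow C (∑ t, (i + j) t) := by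
  induction i using induction_add_single with
  | zero => simpa [hTT0] using Submodule.mem_sup_left hu
  | add_single i l ih =>
    obtain ⟨c, hc, b, hb, hcb⟩ := Submodule.mem_sup.mp ih
    rw [hTTs, Module.End.mul_apply, ← hcb, map_add, add_right_comm, sum_add_single_one]
    exact add_mem (hraise l _ c hc)
      (Submodule.mem_sup_right (apply_mem_filtrationBelow_succ hraise l hb))

theorem mem_filtrationBelow_of_monomial_mem
    (hdrop : ∀ l N, ∀ f ∈ filtrationBelow C (N + 1), T l f ∈ filtrationBelow C (N + 1) →
      f ∈ filtrationBelow C N)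
    (i : ι → ℕ) {N : ℕ} {f : V} (hf : f ∈ filtrationBelow C (N + 1))
    (h : TT i f ∈ filtrationBelow C (N + ∑ t, i t)) : f ∈ filtrationBelow C N := by
  induction i using induction_add_single with
  | zero => simpa [hTT0] using h
  | add_single i l ih =>
    rw [hTTs, sum_add_single_one, ← add_assoc] at h
    refine ih (hdrop l _ _ ?_ h)
    rw [add_right_comm]
    exact monomial_mem_filtrationBelow hraise hTT0 hTTs i hf

theorem proj_monomial_mapsTo_injOn {π : (ι → ℕ) → V →ₗ[k] V}
    (hπ_eq : ∀ m, ∀ v ∈ C m, π m v = v) (hπ_ne : ∀ m m', m ≠ m' → ∀ v ∈ C m', π m v = 0)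
    (hdrop : ∀ l N, ∀ f ∈ filtrationBelow C (N + 1), T l f ∈ filtrationBelow C (N + 1) →
      f ∈ filtrationBelow C N)
    (i j : ι → ℕ) :
    Set.MapsTo (fun v => π (i + j) (TT i v)) (C j : Set V) (C (i + j) : Set V) ∧
      Set.InjOn (fun v => π (i + j) (TT i v)) (C j : Set V) := by
  have hsplit : ∀ u ∈ C j, π (i + j) (TT i u) ∈ C (i + j) ∧
      TT i u - π (i + j) (TT i u) ∈ filtrationBelow C (∑ t, (i + j) t) := by
    intro u hu
    obtain ⟨c, hc, b, hb, hcb⟩ :=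
      Submodule.mem_sup.mp (monomial_mem_sup_filtrationBelow hraise hTT0 hTTs i hu)
    rw [← hcb, proj_add_of_mem_filtrationBelow hπ_eq hπ_ne hc hb, add_sub_cancel_left]
    exact ⟨hc, hb⟩
  refine ⟨fun u hu => (hsplit u hu).1, fun u hu w hw huw => sub_eq_zero.mp ?_⟩
  have hx : u - w ∈ C j := sub_mem hu hw
  have hπx : π (i + j) (TT i (u - w)) = 0 := by simpa [sub_eq_zero] using huw
  have hTx := (hsplit _ hx).2
  rw [hπx, sub_zero, Pi.add_def, sum_add_distrib, add_comm] at hTx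
  refine eq_zero_of_mem_filtrationBelow hπ_eq hπ_ne hx ?_
  exact mem_filtrationBelow_of_monomial_mem hraise hTT0 hTTs hdrop i
    (le_filtrationBelow (Nat.lt_succ_self _) hx) hTx

end Operators

theorem stmt_3_general
    (k : Type*) [Field k] (V : Type*) [AddCommGroup V] [Module k V]
    (d : ℕ)
    (C : (Fin d → ℕ) → Submodule k V)
    (π : (Fin d → ℕ) → (V →ₗ[k] V))
    (hπ_eq : ∀ m, ∀ v ∈ C m, π m v = v)
    (hπ_ne : ∀ m m', m ≠ m' → ∀ v ∈ C m', π m v = 0)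
    (T : Fin d → Module.End k V)
    (TT : (Fin d → ℕ) → Module.End k V)
    (hTT0 : TT 0 = 1)
    (hTTs : ∀ (i : Fin d → ℕ) (j : Fin d), TT (i + Pi.single j 1) = T j * TT i)
    (B : ℕ → Submodule k V)
    (hB : ∀ N, B N = ⨆ (m : Fin d → ℕ) (_ : ∑ l, m l ≤ N), C m)
    -- (H2)
    (H2a : ∀ j, ∀ v ∈ C 0, T j v ∈ C (Pi.single j 1))
    (H2b : ∀ j : Fin d, Set.InjOn (⇑(T j)) (C 0 : Set V))
    -- (H3)
    (H3 : ∀ m : Fin d → ℕ, m ≠ 0 → ∀ j : Fin d, ∀ v ∈ C m,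
      T j v ∈ (if m j = 0 then (⊥ : Submodule k V) else C (m - Pi.single j 1))
        ⊔ C m ⊔ C (m + Pi.single j 1))
    -- (H4)
    (H4 : ∀ (j : Fin d) (N : ℕ), ∀ f ∈ B (N + 1), T j f ∈ B (N + 1) → f ∈ B N) :
    ∀ i j : Fin d → ℕ,
      Set.MapsTo (fun v => π (i + j) (TT i v)) (C j : Set V) (C (i + j) : Set V) ∧
      Set.InjOn (fun v => π (i + j) (TT i v)) (C j : Set V) := by
  have hraise l m v (hv : v ∈ C m) := apply_mem_sup_filtrationBelow H2a H3 l hv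
  have hdrop := mem_filtrationBelow_of_apply_mem hπ_eq hπ_ne H2a H2b
    (by simpa only [filtrationBelow_succ, ← hB] using H4)
  exact proj_monomial_mapsTo_injOn hraise hTT0 hTTs hπ_eq hπ_ne hdrop

/-- Under (H2)–(H4), for all multi-indices `𝐢, 𝐣` the
restriction of `π (𝐢+𝐣) ∘ 𝐓^𝐢` to `C 𝐣` is an injective map into `C (𝐢+𝐣)`. -/
theorem stmt_3
    (k : Type*) [Field k] (V : Type*) [AddCommGroup V] [Module k V]
    (d : ℕ) (hd : 1 ≤ d)
    (C : (Fin d → ℕ) → Submodule k V)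
    (hC : DirectSum.IsInternal C)
    (hCne : ∀ m, C m ≠ ⊥)
    (π : (Fin d → ℕ) → (V →ₗ[k] V))
    (hπ_eq : ∀ m, ∀ v ∈ C m, π m v = v)
    (hπ_ne : ∀ m m', m ≠ m' → ∀ v ∈ C m', π m v = 0)
    (T : Fin d → Module.End k V)
    (hcomm : ∀ a b, Commute (T a) (T b))
    (TT : (Fin d → ℕ) → Module.End k V)
    (hTT0 : TT 0 = 1)
    (hTTs : ∀ (i : Fin d → ℕ) (j : Fin d), TT (i + Pi.single j 1) = T j * TT i)
    (B : ℕ → Submodule k V)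
    (hB : ∀ N, B N = ⨆ (m : Fin d → ℕ) (_ : ∑ l, m l ≤ N), C m)
    -- (H2)
    (H2a : ∀ j, ∀ v ∈ C 0, T j v ∈ C (Pi.single j 1))
    (H2b : ∀ j : Fin d, Set.InjOn (⇑(T j)) (C 0 : Set V))
    -- (H3)
    (H3 : ∀ m : Fin d → ℕ, m ≠ 0 → ∀ j : Fin d, ∀ v ∈ C m,
      T j v ∈ (if m j = 0 then (⊥ : Submodule k V) else C (m - Pi.single j 1))
        ⊔ C m ⊔ C (m + Pi.single j 1))
    -- (H4)
    (H4 : ∀ (j : Fin d) (N : ℕ), ∀ f ∈ B (N + 1), T j f ∈ B (N + 1) → f ∈ B N) :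
    ∀ i j : Fin d → ℕ,
      Set.MapsTo (fun v => π (i + j) (TT i v)) (C j : Set V) (C (i + j) : Set V) ∧
      Set.InjOn (fun v => π (i + j) (TT i v)) (C j : Set V) :=
  stmt_3_general k V d C π hπ_eq hπ_ne T TT hTT0 hTTs B hB H2a H2b H3 H4
end

section
/- Assume conditions (C1)–(C4). Then, regarding V as a module over the polynomial ring k[X] with X acting by the endomorphism T, V is a free k[X]-module admitting an infinite free module basis; in particular V is free of infinite rank over k[X]. -/
/-!
Let `π n` be the projection onto `C n` and `B N = C 0 ⊕ ⋯ ⊕ C N`. By (C2) and (C3), `T` maps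
`B N` into `B (N + 1)`, so it has a leading part `L = π (n + 1) ∘ T : C n → C (n + 1)`, and (C2),
(C4) make `L` injective. Choose complements `C n = L (C (n - 1)) ⊕ D n` (with `D 0 = C 0`); then
`C N = ⨁_{m ≤ N} L^(N - m) (D m)`, and `L^j d` is the degree-`(m + j)` leading term of `T^j d`
for `d ∈ D m`. Comparing leading terms in the top degree shows that a union of `k`-bases of the
`D n` is `k[X]`-linearly independent, and induction on the degree shows that it generates. By
(C1), `dim L (C (n - 1)) ≤ dim C (n - 1) < dim C n`, so no `D n` vanishes and the basis is infinite.
-/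

open Module Polynomial DirectSum

lemma span_range_subtype_comp_basis {R M κ : Type*} [Ring R] [AddCommGroup M] [Module R M]
    {W : Submodule R M} (b : Basis κ R W) : Submodule.span R (Set.range (W.subtype ∘ b)) = W := by
  rw [Set.range_comp, Submodule.span_image, b.span_eq, Submodule.map_subtype_top]

lemma linearIndependent_sigma_of_iSupIndep {R M η : Type*} [Ring R] [AddCommGroup M] [Module R M]
    {κ : η → Type*} {W : η → Submodule R M} (hW : iSupIndep W) (b : ∀ j, Basis (κ j) R (W j)) :
    LinearIndependent R (fun i : Σ j, κ j => (b i.1 i.2 : M)) := by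
  refine linearIndependent_iUnion_finite
    (fun j => (b j).linearIndependent.map' _ (W j).ker_subtype) fun j t _ hj => ?_
  simpa only [span_range_subtype_comp_basis] using hW.disjoint_biSup hj

namespace GradedFree

section Filtration

variable {R V : Type*} [Ring R] [AddCommGroup V] [Module R V] (C : ℕ → Submodule R V)

def filtration (N : ℕ) : Submodule R V :=
  ⨆ (n : ℕ) (_ : n ≤ N), C n

variable {C} in
lemma le_filtration {n N : ℕ} (h : n ≤ N) : C n ≤ filtration C N :=
  le_iSup₂ (f := fun n (_ : n ≤ N) => C n) n h

variable {C} in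
lemma filtration_mono : Monotone (filtration C) :=
  fun _ _ hMN => iSup₂_le fun _ hn => le_filtration (hn.trans hMN)

variable [Decomposition C]

noncomputable def proj (n : ℕ) : V →ₗ[R] V :=
  (C n).subtype ∘ₗ component R ℕ (fun i => C i) n ∘ₗ (decomposeLinearEquiv C).toLinearMap

variable {C}

lemma proj_mem (n : ℕ) (v : V) : proj C n v ∈ C n :=
  (decompose C v n).2

lemma proj_of_mem {n : ℕ} {v : V} (hv : v ∈ C n) : proj C n v = v :=
  decompose_of_mem_same C hv

lemma proj_of_mem_of_ne {m n : ℕ} {v : V} (hv : v ∈ C m) (hmn : m ≠ n) : proj C n v = 0 :=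
  decompose_of_mem_ne C hv hmn

lemma filtration_le_ker_proj {N n : ℕ} (h : N < n) : filtration C N ≤ LinearMap.ker (proj C n) :=
  iSup₂_le fun _ hm _ hv => proj_of_mem_of_ne hv (by omega)

lemma eq_zero_of_mem_of_mem_filtration {N : ℕ} {v : V} (hv : v ∈ C (N + 1))
    (hvN : v ∈ filtration C N) : v = 0 := by
  rw [← proj_of_mem hv]
  exact filtration_le_ker_proj N.lt_succ_self hvN

lemma sub_proj_mem_filtration {N : ℕ} {v : V} (hv : v ∈ filtration C (N + 1)) :
    v - proj C (N + 1) v ∈ filtration C N := by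
  suffices filtration C (N + 1) ≤ (filtration C N).comap (LinearMap.id - proj C (N + 1)) from
    this hv
  refine iSup₂_le fun n hn v hv => ?_
  rcases eq_or_ne n (N + 1) with rfl | hne
  · simp [proj_of_mem hv]
  · simpa [proj_of_mem_of_ne hv hne] using le_filtration (by omega) hv

end Filtration

section Operator

variable {R V : Type*} [CommRing R] [AddCommGroup V] [Module R V]
  {C : ℕ → Submodule R V} {T : Module.End R V}

variable (C T) in
def RaisesFiltrationByOne : Prop :=
  ∀ n, ∀ v ∈ C n, T v ∈ filtration C (n + 1)

lemma RaisesFiltrationByOne.apply_mem {N : ℕ} {v : V} (hT : RaisesFiltrationByOne C T)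
    (hv : v ∈ filtration C N) : T v ∈ filtration C (N + 1) := by
  suffices filtration C N ≤ (filtration C (N + 1)).comap T from this hv
  exact iSup₂_le fun n hn v hv => filtration_mono (by omega) (hT n v hv)

lemma RaisesFiltrationByOne.pow_apply_mem {N : ℕ} {v : V} (hT : RaisesFiltrationByOne C T)
    (hv : v ∈ filtration C N) (j : ℕ) : (T ^ j) v ∈ filtration C (N + j) := by
  induction j with
  | zero => simpa using hv
  | succ j ih =>
    rw [pow_succ', Module.End.mul_apply]
    exact hT.apply_mem ih

lemma RaisesFiltrationByOne.of_mem_sup (h0 : ∀ v ∈ C 0, T v ∈ C 1)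
    (hsucc : ∀ n : ℕ, 1 ≤ n → ∀ v ∈ C n, T v ∈ C (n - 1) ⊔ C n ⊔ C (n + 1)) :
    RaisesFiltrationByOne C T := by
  rintro (_ | n) v hv
  · exact le_filtration le_rfl (h0 v hv)
  · have hle : C (n + 1 - 1) ⊔ C (n + 1) ⊔ C (n + 1 + 1) ≤ filtration C (n + 1 + 1) :=
      sup_le (sup_le (le_filtration (by omega)) (le_filtration (by omega))) (le_filtration le_rfl)
    exact hle (hsucc (n + 1) (by omega) v hv)

variable [Decomposition C]

variable (C T) in
def LeadingTermInjective : Prop :=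
  ∀ n, ∀ v ∈ C n, proj C (n + 1) (T v) = 0 → v = 0

lemma RaisesFiltrationByOne.leadingTermInjective (hT : RaisesFiltrationByOne C T)
    (h0 : ∀ v ∈ C 0, T v ∈ C 1) (hinj : Set.InjOn T (C 0))
    (hstrict : ∀ N, ∀ v ∈ filtration C (N + 1), T v ∈ filtration C (N + 1) → v ∈ filtration C N) :
    LeadingTermInjective C T := by
  rintro (_ | n) v hv h
  · refine hinj hv (zero_mem _) ?_
    rw [map_zero, ← h, proj_of_mem (h0 v hv)]
  · have hTv : T v ∈ filtration C (n + 1) := by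
      simpa [h] using sub_proj_mem_filtration (hT _ v hv)
    exact eq_zero_of_mem_of_mem_filtration hv (hstrict n v (le_filtration le_rfl hv) hTv)

variable (C T) in
noncomputable def leadImage : ℕ → Submodule R V
  | 0 => ⊥
  | n + 1 => (C n).map (proj C (n + 1) ∘ₗ T)

lemma leadImage_le (n : ℕ) : leadImage C T n ≤ C n := by
  cases n with
  | zero => exact bot_le
  | succ n =>
    rintro _ ⟨v, -, rfl⟩
    exact proj_mem _ _

lemma RaisesFiltrationByOne.proj_succ_apply_proj (hT : RaisesFiltrationByOne C T) {N : ℕ} {v : V}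
    (hv : v ∈ filtration C N) : proj C (N + 1) (T (proj C N v)) = proj C (N + 1) (T v) := by
  suffices filtration C N ≤
      LinearMap.ker (proj C (N + 1) ∘ₗ T ∘ₗ proj C N - proj C (N + 1) ∘ₗ T) by
    simpa [sub_eq_zero] using this hv
  refine iSup₂_le fun n hn w hw => ?_
  rcases hn.lt_or_eq with hlt | rfl
  · have hTw := filtration_le_ker_proj (Nat.succ_lt_succ hlt) (hT n w hw)
    simp_all [proj_of_mem_of_ne hw hlt.ne]
  · simp [proj_of_mem hw]

lemma RaisesFiltrationByOne.proj_aeval (hT : RaisesFiltrationByOne C T) {m N : ℕ} {p : R[X]}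
    {v : V} (hv : v ∈ C m) (hp : m + p.natDegree ≤ N) :
    proj C N (aeval T p v) = p.coeff (N - m) • proj C N ((T ^ (N - m)) v) := by
  rw [aeval_eq_sum_range, LinearMap.sum_apply, map_sum, Finset.sum_eq_single (N - m)]
  · simp
  · intro j hj hjN
    rw [Finset.mem_range] at hj
    have := filtration_le_ker_proj (n := N) (by omega)
      (hT.pow_apply_mem (le_filtration le_rfl hv) j)
    simp_all
  · intro hj
    simp [coeff_eq_zero_of_natDegree_lt (show p.natDegree < N - m by simp at hj; omega)]

lemma finrank_leadImage_lt {k V : Type*} [Field k] [AddCommGroup V] [Module k V]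
    {C : ℕ → Submodule k V} [Decomposition C] {T : Module.End k V} (h0 : 0 < finrank k (C 0))
    (hgrow : StrictMono fun n => finrank k (C n)) (n : ℕ) :
    finrank k (leadImage C T n) < finrank k (C n) := by
  cases n with
  | zero => rwa [leadImage, finrank_bot]
  | succ n =>
    have : Module.Finite k (C n) :=
      Module.finite_of_finrank_pos (h0.trans_le (hgrow.monotone n.zero_le))
    exact (Submodule.finrank_map_le _ _).trans_lt (hgrow n.lt_succ_self)

lemma exists_leadImage_complements {k V : Type*} [Field k] [AddCommGroup V] [Module k V]
    {C : ℕ → Submodule k V} [Decomposition C] {T : Module.End k V} (h0 : 0 < finrank k (C 0))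
    (hgrow : StrictMono fun n => finrank k (C n)) :
    ∃ D : ℕ → Submodule k V, (∀ n, Disjoint (leadImage C T n) (D n)) ∧
      (∀ n, leadImage C T n ⊔ D n = C n) ∧ ∀ n, D n ≠ ⊥ := by
  choose D hdisj hsup using fun n =>
    IsModularLattice.exists_disjoint_and_sup_eq (leadImage_le (C := C) (T := T) n)
  refine ⟨D, hdisj, hsup, fun n hD => (finrank_leadImage_lt (T := T) h0 hgrow n).ne ?_⟩
  rw [← hsup n, hD, sup_bot_eq]

end Operator

section FreeBasis

variable {R V : Type*} [CommRing R] [AddCommGroup V] [Module R V]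
  {C : ℕ → Submodule R V} [Decomposition C] {T : Module.End R V}
  {D : ℕ → Submodule R V} {ι : Type*} {deg : ι → ℕ} {f : ι → V}

lemma eq_zero_of_proj_sum_pow_eq_zero (hT : RaisesFiltrationByOne C T)
    (hlead : LeadingTermInjective C T)
    (hdisj : ∀ n, Disjoint (leadImage C T n) (D n)) (hDC : ∀ n, D n ≤ C n)
    (hf : ∀ i, f i ∈ D (deg i)) (hli : LinearIndependent R f)
    (N : ℕ) (s : Finset ι) (c : ι → R) (hs : ∀ i ∈ s, deg i ≤ N)
    (h : proj C N (∑ i ∈ s, c i • (T ^ (N - deg i)) (f i)) = 0) : ∀ i ∈ s, c i = 0 := by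
  classical
  induction N generalizing s with
  | zero =>
    have hdeg : ∀ i ∈ s, deg i = 0 := fun i hi => Nat.le_zero.mp (hs i hi)
    have hmem : ∑ i ∈ s, c i • f i ∈ C 0 :=
      Submodule.sum_mem _ fun i hi => Submodule.smul_mem _ _ (hdeg i hi ▸ hDC _ (hf i))
    simp only [Nat.zero_sub, pow_zero, Module.End.one_apply] at h
    exact linearIndependent_iff'.mp hli s c (proj_of_mem hmem ▸ h)
  | succ N ih =>
    set u := ∑ i ∈ s with deg i ≤ N, c i • (T ^ (N - deg i)) (f i)
    set d := ∑ i ∈ s with ¬ deg i ≤ N, c i • f i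
    have hsplit : ∑ i ∈ s, c i • (T ^ (N + 1 - deg i)) (f i) = T u + d := by
      rw [← Finset.sum_filter_add_sum_filter_not s (fun i => deg i ≤ N), map_sum]
      congr 1 <;> refine Finset.sum_congr rfl fun i hi => ?_ <;> rw [Finset.mem_filter] at hi
      · rw [show N + 1 - deg i = N - deg i + 1 by omega, pow_succ', Module.End.mul_apply, map_smul]
      · rw [show N + 1 - deg i = 0 by have := hs i hi.1; omega, pow_zero, Module.End.one_apply]
    have hu : u ∈ filtration C N := by
      refine Submodule.sum_mem _ fun i hi => Submodule.smul_mem _ _ ?_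
      have := hT.pow_apply_mem (le_filtration le_rfl (hDC _ (hf i))) (N - deg i)
      rwa [show deg i + (N - deg i) = N by rw [Finset.mem_filter] at hi; omega] at this
    have hd : d ∈ D (N + 1) := by
      refine Submodule.sum_mem _ fun i hi => Submodule.smul_mem _ _ ?_
      rw [Finset.mem_filter] at hi
      rw [← show deg i = N + 1 by have := hs i hi.1; omega]
      exact hf i
    rw [hsplit, map_add, ← hT.proj_succ_apply_proj hu, proj_of_mem (hDC _ hd)] at h
    have hlead_mem : proj C (N + 1) (T (proj C N u)) ∈ leadImage C T (N + 1) :=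
      ⟨_, proj_mem _ _, rfl⟩
    have hd0 : d = 0 := Submodule.disjoint_def.mp (hdisj (N + 1)) d
      (by rw [eq_neg_of_add_eq_zero_right h]; exact neg_mem hlead_mem) hd
    rw [hd0, add_zero] at h
    intro i hi
    by_cases hiN : deg i ≤ N
    · exact ih _ (fun j hj => (Finset.mem_filter.mp hj).2) (hlead N _ (proj_mem _ _) h) i
        (Finset.mem_filter.mpr ⟨hi, hiN⟩)
    · exact linearIndependent_iff'.mp hli _ c hd0 i (Finset.mem_filter.mpr ⟨hi, hiN⟩)

lemma linearIndependent_aeval (hT : RaisesFiltrationByOne C T)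
    (hlead : LeadingTermInjective C T)
    (hdisj : ∀ n, Disjoint (leadImage C T n) (D n)) (hDC : ∀ n, D n ≤ C n)
    (hf : ∀ i, f i ∈ D (deg i)) (hli : LinearIndependent R f) :
    LinearIndependent R[X] (fun i => AEval'.of T (f i)) := by
  classical
  rw [linearIndependent_iff]
  intro l hl
  by_contra hl0
  obtain ⟨i₀, hi₀, hmax⟩ := l.support.exists_max_image (fun i => deg i + (l i).natDegree)
    (Finsupp.support_nonempty_iff.mpr hl0)
  set N := deg i₀ + (l i₀).natDegree
  have hsum :
      proj C N (∑ i ∈ l.support, (l i).coeff (N - deg i) • (T ^ (N - deg i)) (f i)) = 0 := by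
    have := congrArg (proj C N ∘ (AEval'.of T).symm) hl
    simp only [Finsupp.linearCombination_apply, Finsupp.sum, Function.comp_apply, map_sum,
      map_zero] at this
    rw [map_sum, ← this]
    refine Finset.sum_congr rfl fun i hi => ?_
    rw [map_smul, ← hT.proj_aeval (hDC _ (hf i)) (hmax i hi)]
    rfl
  have := eq_zero_of_proj_sum_pow_eq_zero hT hlead hdisj hDC hf hli N l.support _
    (fun i hi => (Nat.le_add_right _ _).trans (hmax i hi)) hsum i₀ hi₀
  rw [show N - deg i₀ = (l i₀).natDegree by omega, coeff_natDegree, leadingCoeff_eq_zero] at this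
  exact Finsupp.mem_support_iff.mp hi₀ this

lemma span_aeval_eq_top (hT : RaisesFiltrationByOne C T) (hsup : ∀ n, leadImage C T n ⊔ D n = C n)
    (hspan : ∀ n, D n ≤ Submodule.span R (Set.range f)) :
    Submodule.span R[X] (Set.range fun i => AEval'.of T (f i)) = ⊤ := by
  set S := Submodule.span R[X] (Set.range fun i => AEval'.of T (f i))
  set K : Submodule R V := (S.restrictScalars R).comap (AEval'.of T).toLinearMap
  have hK : ∀ v ∈ K, T v ∈ K := fun v hv => by
    change AEval'.of T (T v) ∈ S
    rw [← AEval'.X_smul_of]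
    exact S.smul_mem X hv
  have hfK : Submodule.span R (Set.range f) ≤ K :=
    Submodule.span_le.mpr <| Set.range_subset_iff.mpr fun i =>
      show AEval'.of T (f i) ∈ S from Submodule.subset_span ⟨i, rfl⟩
  have hCK : ∀ n, C n ≤ K := by
    intro n
    induction n using Nat.strong_induction_on with
    | _ n ih =>
      rw [← hsup n]
      refine sup_le ?_ ((hspan n).trans hfK)
      cases n with
      | zero => exact bot_le
      | succ n =>
        have hfilt : filtration C n ≤ K := iSup₂_le fun m hm => ih m (by omega)
        rintro _ ⟨v, hv, rfl⟩
        have := sub_mem (hK v (ih n (by omega) hv))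
          (hfilt (sub_proj_mem_filtration (hT n v hv)))
        simpa using this
  have htop : ⊤ ≤ K := (Decomposition.isInternal C).submodule_iSup_eq_top ▸ iSup_le hCK
  refine eq_top_iff.mpr fun w _ => ?_
  have : AEval'.of T ((AEval'.of T).symm w) ∈ S := htop Submodule.mem_top
  rwa [LinearEquiv.apply_symm_apply] at this

noncomputable def basisOfComplements (hT : RaisesFiltrationByOne C T)
    (hlead : LeadingTermInjective C T) (hdisj : ∀ n, Disjoint (leadImage C T n) (D n))
    (hsup : ∀ n, leadImage C T n ⊔ D n = C n) {κ : ℕ → Type*} (b : ∀ n, Basis (κ n) R (D n)) :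
    Basis (Σ n, κ n) R[X] (AEval' T) :=
  have hDC n : D n ≤ C n := hsup n ▸ le_sup_right
  Basis.mk (v := fun i => AEval'.of T (b i.1 i.2))
    (linearIndependent_aeval hT hlead hdisj hDC (deg := Sigma.fst) (fun i => (b i.1 i.2).2)
      (linearIndependent_sigma_of_iSupIndep
        ((Decomposition.isInternal C).submodule_iSupIndep.mono hDC) b))
    (span_aeval_eq_top hT hsup fun n => by
      rw [← span_range_subtype_comp_basis (b n)]
      exact Submodule.span_mono (Set.range_subset_iff.mpr fun a => ⟨⟨n, a⟩, rfl⟩)).ge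

end FreeBasis

end GradedFree

open GradedFree

theorem stmt_5_general
    (k : Type*) [Field k] (V : Type*) [AddCommGroup V] [Module k V]
    (C : ℕ → Submodule k V)
    (hC : DirectSum.IsInternal C)
    (T : Module.End k V)
    (B : ℕ → Submodule k V)
    (hB : ∀ N, B N = ⨆ (n : ℕ) (_ : n ≤ N), C n)
    -- (C1)
    (C1 : ∀ n : ℕ, (∑ m ∈ Finset.range n, Module.finrank k (C m)) < Module.finrank k (C n))
    -- (C2)
    (C2a : ∀ v ∈ C 0, T v ∈ C 1)
    (C2b : Set.InjOn (⇑T) (C 0 : Set V))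
    -- (C3)
    (C3 : ∀ n : ℕ, 1 ≤ n → ∀ v ∈ C n, T v ∈ C (n - 1) ⊔ C n ⊔ C (n + 1))
    -- (C4)
    (C4 : ∀ N : ℕ, ∀ f ∈ B (N + 1), T f ∈ B (N + 1) → f ∈ B N) :
    ∃ s : Set (Module.AEval' T), s.Infinite ∧
      Nonempty (Module.Basis s (Polynomial k) (Module.AEval' T)) := by
  let := hC.chooseDecomposition
  obtain rfl : B = filtration C := funext hB
  have hT := RaisesFiltrationByOne.of_mem_sup C2a C3
  have hgrow : StrictMono fun n => finrank k (C n) := strictMono_nat_of_lt_succ fun n =>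
    (Finset.single_le_sum (fun _ _ => Nat.zero_le _) (Finset.self_mem_range_succ n)).trans_lt
      (C1 (n + 1))
  obtain ⟨D, hdisj, hsup, hD⟩ := exists_leadImage_complements (T := T) (by simpa using C1 0) hgrow
  have (n : ℕ) : Nontrivial (D n) := Submodule.nontrivial_iff_ne_bot.mpr (hD n)
  let b n := Basis.ofVectorSpace k (D n)
  let basis := basisOfComplements hT (hT.leadingTermInjective C2a C2b C4) hdisj hsup b
  have : Infinite (Σ n, Basis.ofVectorSpaceIndex k (D n)) :=
    Infinite.of_injective (fun n => ⟨n, (b n).index_nonempty.some⟩) fun _ _ h =>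
      congrArg Sigma.fst h
  exact ⟨Set.range basis, Set.infinite_range_of_injective basis.injective, ⟨basis.reindexRange⟩⟩

/-- Under (C1)–(C4), `V`, viewed as a module over `k[X]` with
`X` acting by `T` (i.e. `Module.AEval' T`), is a free `k[X]`-module admitting
an infinite free module basis; in particular it is free of infinite rank. -/
theorem stmt_5
    (k : Type*) [Field k] (V : Type*) [AddCommGroup V] [Module k V]
    (C : ℕ → Submodule k V)
    (hC : DirectSum.IsInternal C)
    (hCne : ∀ n, C n ≠ ⊥)
    (T : Module.End k V)
    (B : ℕ → Submodule k V)
    (hB : ∀ N, B N = ⨆ (n : ℕ) (_ : n ≤ N), C n)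
    -- (C1)
    (C1fin : ∀ n, FiniteDimensional k (C n))
    (C1 : ∀ n : ℕ, (∑ m ∈ Finset.range n, Module.finrank k (C m)) < Module.finrank k (C n))
    -- (C2)
    (C2a : ∀ v ∈ C 0, T v ∈ C 1)
    (C2b : Set.InjOn (⇑T) (C 0 : Set V))
    -- (C3)
    (C3 : ∀ n : ℕ, 1 ≤ n → ∀ v ∈ C n, T v ∈ C (n - 1) ⊔ C n ⊔ C (n + 1))
    -- (C4)
    (C4 : ∀ N : ℕ, ∀ f ∈ B (N + 1), T f ∈ B (N + 1) → f ∈ B N) :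
    ∃ s : Set (Module.AEval' T), s.Infinite ∧
      Nonempty (Module.Basis s (Polynomial k) (Module.AEval' T)) :=
  stmt_5_general k V C hC T B hB C1 C2a C2b C3 C4
end

section
/- The K-linear span of the polynomials (X + ι(a)·Y)^r in K[X,Y], as a ranges over all elements of 𝔽, equals W, the span of the monomials X^i Y^{r−i} for admissible i. -/
/-!
Expanding, the coefficient of `X^i Y^(r-i)` in `(X + c Y)^r` is `c^(r-i) * C(r, i)`, and by
Lucas's theorem `p ∤ C(r, i)` exactly when `i` is admissible; this gives `⊆`. Conversely, over a
field with `q` elements `∑ₐ a^m` is `-1` when `m > 0` and `q - 1 ∣ m`, and `0` otherwise, so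
weighting `(X + a Y)^r` by `a^(q-1-(r-i))` and summing over `a` isolates `-C(r, i) X^i Y^(r-i)`
(for `i = r` take `a = 0` instead).
-/

open MvPolynomial Finset

theorem Nat.Prime.dvd_choose_iff_lt {p a b : ℕ} (hp : p.Prime) (ha : a < p) :
    p ∣ a.choose b ↔ a < b := by
  refine ⟨fun h => ?_, fun h => by rw [Nat.choose_eq_zero_of_lt h]; exact dvd_zero p⟩
  by_contra! hba
  have := Nat.factorization_choose_eq_zero_of_lt (k := b) ha
  rw [hp.dvd_iff_one_le_factorization (Nat.choose_pos hba).ne'] at h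
  omega

theorem Nat.Prime.not_dvd_choose_iff_digits_le {p n r i : ℕ} (hp : p.Prime)
    (hr : r < p ^ n) (hi : i < p ^ n) :
    ¬ p ∣ r.choose i ↔ ∀ j, i / p ^ j % p ≤ r / p ^ j % p := by
  have : Fact p.Prime := ⟨hp⟩
  have hdigit (j : ℕ) :
      p ∣ (r / p ^ j % p).choose (i / p ^ j % p) ↔ r / p ^ j % p < i / p ^ j % p :=
    hp.dvd_choose_iff_lt (Nat.mod_lt _ hp.pos)
  rw [(Choose.lucas_theorem_nat hr hi).dvd_iff dvd_rfl, hp.prime.dvd_finsetProd_iff]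
  simp only [hdigit, mem_range, not_exists, not_and, not_lt]
  refine ⟨fun h j => ?_, fun h j _ => h j⟩
  rcases lt_or_ge j n with hj | hj
  · exact h j hj
  · rw [Nat.div_eq_of_lt (hi.trans_le (Nat.pow_le_pow_right hp.pos hj))]
    exact Nat.zero_le _

theorem Nat.cast_choose_ne_zero_iff_digits_le (K : Type*) [AddMonoidWithOne K] {p n r i : ℕ}
    [CharP K p] (hp : p.Prime) (hr : r < p ^ n) (hi : i < p ^ n) :
    (r.choose i : K) ≠ 0 ↔ ∀ j, i / p ^ j % p ≤ r / p ^ j % p := by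
  rw [Ne, CharP.cast_eq_zero_iff K p]
  exact hp.not_dvd_choose_iff_digits_le hr hi

theorem FiniteField.sum_pow_eq_ite {F : Type*} [Field F] [Fintype F] (m : ℕ) :
    ∑ x : F, x ^ m = if 0 < m ∧ Fintype.card F - 1 ∣ m then -1 else 0 := by
  classical
  rcases Nat.eq_zero_or_pos m with rfl | hm
  · simp
  calc ∑ x : F, x ^ m = ∑ x ∈ univ.filter (· ≠ 0), x ^ m :=
        (sum_filter_of_ne fun x _ hx => by rintro rfl; exact hx (zero_pow hm.ne')).symm
    _ = ∑ x : {x : F // x ≠ 0}, (x : F) ^ m := sum_subtype _ (by simp) _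
    _ = ∑ x : Fˣ, (x : F) ^ m := Fintype.sum_equiv unitsEquivNeZero.symm _ _ fun _ => rfl
    _ = _ := by rw [FiniteField.sum_pow_units, if_congr (and_iff_right hm) rfl rfl]

theorem FiniteField.sum_pow_card_sub_one_sub_add_sub {F : Type*} [Field F] [Fintype F]
    {r i k : ℕ} (hir : i < r) (hr : r < Fintype.card F) (hk : k ≤ r) :
    ∑ x : F, x ^ (Fintype.card F - 1 - (r - i) + (r - k)) = if k = i then -1 else 0 := by
  rw [sum_pow_eq_ite]
  refine if_congr ⟨fun ⟨hm, hdvd⟩ => ?_, ?_⟩ rfl rfl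
  · have := Nat.eq_of_dvd_of_lt_two_mul hm.ne' hdvd (by omega)
    omega
  · rintro rfl
    rw [show Fintype.card F - 1 - (r - k) + (r - k) = Fintype.card F - 1 by omega]
    exact ⟨by omega, dvd_rfl⟩

theorem MvPolynomial.X_add_C_mul_X_pow_eq_sum {R σ : Type*} [CommSemiring R] (s t : σ) (c : R)
    (r : ℕ) :
    (X s + C c * X t) ^ r =
      ∑ k ∈ range (r + 1), (c ^ (r - k) * r.choose k) • (X s ^ k * X t ^ (r - k)) := by
  rw [add_pow]
  refine sum_congr rfl fun k _ => ?_
  rw [smul_eq_C_mul, map_mul, mul_pow, ← C_pow, ← C_eq_coe_nat]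
  ring

theorem MvPolynomial.sum_pow_smul_X_add_C_mul_X_pow {𝔽 K σ : Type*} [Field 𝔽] [Fintype 𝔽]
    [CommRing K] (ι : 𝔽 →+* K) (s t : σ) {r i : ℕ} (hir : i < r) (hr : r < Fintype.card 𝔽) :
    ∑ a : 𝔽, ι a ^ (Fintype.card 𝔽 - 1 - (r - i)) • (X s + C (ι a) * X t) ^ r =
      -(r.choose i : K) • (X s ^ i * X t ^ (r - i)) := by
  set e := Fintype.card 𝔽 - 1 - (r - i)
  calc _ = ∑ k ∈ range (r + 1), (ι (∑ a : 𝔽, a ^ (e + (r - k))) * r.choose k) •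
        (X s ^ k * X t ^ (r - k) : MvPolynomial σ K) := by
        simp_rw [X_add_C_mul_X_pow_eq_sum, smul_sum, smul_smul]
        rw [sum_comm]
        refine sum_congr rfl fun k _ => ?_
        rw [← sum_smul, map_sum, sum_mul]
        simp only [pow_add, map_mul, map_pow, mul_assoc]
    _ = ∑ k ∈ range (r + 1),
        if k = i then -(r.choose i : K) • (X s ^ i * X t ^ (r - i) : MvPolynomial σ K) else 0 := by
        refine sum_congr rfl fun k hk => ?_
        rw [FiniteField.sum_pow_card_sub_one_sub_add_sub hir hr (mem_range_succ_iff.1 hk)]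
        split_ifs with hki <;> simp [hki]
    _ = _ := by rw [sum_ite_eq', if_pos (mem_range.2 (by omega))]

theorem MvPolynomial.X_add_C_mul_X_pow_mem_span_admissible {K σ : Type*} [CommSemiring K]
    {p n r : ℕ} [CharP K p] (hp : p.Prime) (hr : r < p ^ n) (s t : σ) (c : K) :
    (X s + C c * X t) ^ r ∈ Submodule.span K
      {P | ∃ i : ℕ, i ≤ r ∧ (∀ j : ℕ, i / p ^ j % p ≤ r / p ^ j % p) ∧
        P = X s ^ i * X t ^ (r - i)} := by
  rw [X_add_C_mul_X_pow_eq_sum]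
  refine Submodule.sum_mem _ fun k hk => ?_
  have hkr : k ≤ r := mem_range_succ_iff.1 hk
  by_cases hchoose : (r.choose k : K) = 0
  · simp [hchoose]
  · have hdigits := (Nat.cast_choose_ne_zero_iff_digits_le K hp hr (hkr.trans_lt hr)).1 hchoose
    exact Submodule.smul_mem _ _ (Submodule.subset_span ⟨k, hkr, hdigits, rfl⟩)

theorem MvPolynomial.X_pow_mul_X_pow_mem_span_X_add_C_mul_X_pow {𝔽 K σ : Type*} [Field 𝔽]
    [Fintype 𝔽] [Field K] (ι : 𝔽 →+* K) (s t : σ) {r i : ℕ} (hi : i ≤ r)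
    (hr : r < Fintype.card 𝔽) (hchoose : (r.choose i : K) ≠ 0) :
    X s ^ i * X t ^ (r - i) ∈ Submodule.span K {P | ∃ a : 𝔽, P = (X s + C (ι a) * X t) ^ r} := by
  rcases hi.lt_or_eq with hir | rfl
  · have hmem : -(r.choose i : K) • (X s ^ i * X t ^ (r - i)) ∈
        Submodule.span K {P | ∃ a : 𝔽, P = (X s + C (ι a) * X t) ^ r} := by
      rw [← sum_pow_smul_X_add_C_mul_X_pow ι s t hir hr]
      exact Submodule.sum_mem _ fun a _ =>
        Submodule.smul_mem _ _ (Submodule.subset_span ⟨a, rfl⟩)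
    simpa [hchoose] using Submodule.smul_mem _ (-(r.choose i : K))⁻¹ hmem
  · exact Submodule.subset_span ⟨0, by simp⟩

theorem stmt_6_general
    (p : ℕ) (hp : p.Prime) (n : ℕ)
    (𝔽 : Type*) [Field 𝔽] [Fintype 𝔽] (hF : Fintype.card 𝔽 = p ^ n)
    (K : Type*) [Field K] [CharP K p]
    (ι : 𝔽 →+* K)
    (r : ℕ) (hr : r < p ^ n) :
    Submodule.span K
        {P : MvPolynomial (Fin 2) K |
          ∃ a : 𝔽, P = (X 0 + MvPolynomial.C (ι a) * X 1) ^ r} =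
      Submodule.span K
        {P : MvPolynomial (Fin 2) K |
          ∃ i : ℕ, i ≤ r ∧ (∀ j : ℕ, i / p ^ j % p ≤ r / p ^ j % p) ∧
            P = X 0 ^ i * X 1 ^ (r - i)} := by
  refine le_antisymm (Submodule.span_le.2 ?_) (Submodule.span_le.2 ?_)
  · rintro _ ⟨a, rfl⟩
    exact X_add_C_mul_X_pow_mem_span_admissible hp hr 0 1 (ι a)
  · rintro _ ⟨i, hi, hdigits, rfl⟩
    exact X_pow_mul_X_pow_mem_span_X_add_C_mul_X_pow ι 0 1 hi (hF ▸ hr)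
      ((Nat.cast_choose_ne_zero_iff_digits_le K hp hr (hi.trans_lt hr)).2 hdigits)

/-- The `K`-span of the polynomials `(X + ι a • Y)^r`, as `a`
ranges over the finite field `𝔽` of cardinality `p^n`, equals the span `W` of
the monomials `X^i Y^(r-i)` for `i` admissible (base-`p` digits of `i` bounded
by those of `r`). -/
theorem stmt_6
    (p : ℕ) (hp : p.Prime) (n : ℕ) (hn : 1 ≤ n)
    (𝔽 : Type*) [Field 𝔽] [Fintype 𝔽] (hF : Fintype.card 𝔽 = p ^ n)
    (K : Type*) [Field K] [CharP K p]
    (ι : 𝔽 →+* K)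
    (r : ℕ) (hr : r < p ^ n) :
    Submodule.span K
        {P : MvPolynomial (Fin 2) K |
          ∃ a : 𝔽, P = (X 0 + MvPolynomial.C (ι a) * X 1) ^ r} =
      Submodule.span K
        {P : MvPolynomial (Fin 2) K |
          ∃ i : ℕ, i ≤ r ∧ (∀ j : ℕ, i / p ^ j % p ≤ r / p ^ j % p) ∧
            P = X 0 ^ i * X 1 ^ (r - i)} :=
  stmt_6_general p hp n 𝔽 hF K ι r hr
end

section
/- The K-linear span of the polynomials (ι(a)·X + Y)^r in K[X,Y], as a ranges over all elements of 𝔽, equals W, the span of the monomials X^i Y^{r−i} for admissible i. -/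
/-!
Expanding `(a X + Y)^r` binomially puts each `(a X + Y)^r` in the span of the monomials
`X^i Y^(r-i)` whose coefficient `C(r, i)` is nonzero in `K`, and by Lucas's theorem these are
exactly the admissible ones. Conversely, since `r < q = #𝔽`, the Vandermonde matrix of the
`q` distinct values `ι a` at exponents `0, …, q - 1` is invertible, so a suitable combination
of the `(ι a X + Y)^r` isolates the single term `C(r, i) X^i Y^(r-i)`.
-/

open MvPolynomial Finset

namespace Nat.Prime

variable {p : ℕ}

theorem dvd_choose_iff_lt_s7 (hp : p.Prime) {a b : ℕ} (ha : a < p) : p ∣ a.choose b ↔ a < b := by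
  refine ⟨fun h => ?_, fun h => by simp [Nat.choose_eq_zero_of_lt h]⟩
  by_contra! hba
  exact (hp.coprime_iff_not_dvd.mp (hp.coprime_choose_of_lt ha hba)) h

theorem not_dvd_choose_iff_forall_digit_le (hp : p.Prime) {r i : ℕ} :
    ¬ p ∣ r.choose i ↔ ∀ j, i / p ^ j % p ≤ r / p ^ j % p := by
  have : Fact p.Prime := ⟨hp⟩
  set a := r + i
  have hr : r < p ^ a := (Nat.lt_pow_self hp.one_lt).trans_le
    (Nat.pow_le_pow_right hp.pos (Nat.le_add_right r i))
  have hi : i < p ^ a := (Nat.lt_pow_self hp.one_lt).trans_le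
    (Nat.pow_le_pow_right hp.pos (Nat.le_add_left i r))
  rw [Nat.dvd_iff_mod_eq_zero, Choose.choose_modEq_prod_range_choose_nat hr hi,
    ← Nat.dvd_iff_mod_eq_zero, hp.prime.dvd_finsetProd_iff]
  simp only [mem_range, hp.dvd_choose_iff_lt_s7 (Nat.mod_lt _ hp.pos), not_exists, not_and, not_lt]
  refine ⟨fun h j => ?_, fun h j _ => h j⟩
  by_cases hj : j < a
  · exact h j hj
  · have : i / p ^ j = 0 :=
      Nat.div_eq_of_lt (hi.trans_le (Nat.pow_le_pow_right hp.pos (not_lt.mp hj)))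
    simp [this]

end Nat.Prime

theorem exists_sum_mul_pow_eq_ite {ι K : Type*} [Fintype ι] [Field K] {v : ι → K}
    (hv : Function.Injective v) {i : ℕ} (hi : i < Fintype.card ι) :
    ∃ c : ι → K, ∀ m < Fintype.card ι, ∑ k, c k * v k ^ m = if m = i then 1 else 0 := by
  classical
  let e := Fintype.equivFin ι
  let M := Matrix.vandermonde (v ∘ e.symm)
  have hM : IsUnit M.det := by
    rw [isUnit_iff_ne_zero, Matrix.det_vandermonde_ne_zero_iff]
    exact hv.comp e.symm.injective
  refine ⟨fun k => M⁻¹ ⟨i, hi⟩ (e k), fun m hm => ?_⟩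
  have hsum : ∑ k, M⁻¹ ⟨i, hi⟩ (e k) * v k ^ m = (M⁻¹ * M) ⟨i, hi⟩ ⟨m, hm⟩ := by
    rw [Matrix.mul_apply, ← e.sum_comp]
    simp [M, Matrix.vandermonde_apply]
  rw [hsum, Matrix.nonsing_inv_mul M hM, Matrix.one_apply]
  simp [Fin.ext_iff, eq_comm]

namespace MvPolynomial

variable {σ R : Type*} [CommSemiring R]

theorem C_mul_X_add_X_pow (a : R) (s t : σ) (r : ℕ) :
    (C a * X s + X t) ^ r =
      ∑ m ∈ range (r + 1), (a ^ m * r.choose m) • (X s ^ m * X t ^ (r - m)) := by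
  rw [add_pow]
  refine sum_congr rfl fun m _ => ?_
  rw [smul_eq_C_mul, map_mul, map_pow, map_natCast]
  ring

theorem sum_smul_C_mul_X_add_X_pow {ι : Type*} [Fintype ι] (v c : ι → R) (s t : σ)
    {r i : ℕ} (hi : i ≤ r) (hc : ∀ m ≤ r, ∑ k, c k * v k ^ m = if m = i then 1 else 0) :
    ∑ k, c k • (C (v k) * X s + X t) ^ r = (r.choose i : R) • (X s ^ i * X t ^ (r - i)) := by
  simp_rw [C_mul_X_add_X_pow, smul_sum, smul_smul]
  rw [sum_comm]
  simp_rw [← sum_smul]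
  rw [sum_eq_single i]
  · simp only [← mul_assoc, ← sum_mul, hc i hi, if_pos, one_mul]
  · intro m hm hmi
    simp only [← mul_assoc, ← sum_mul, hc m (mem_range_succ_iff.mp hm), if_neg hmi,
      zero_mul, zero_smul]
  · exact fun h => (h (mem_range_succ_iff.mpr hi)).elim

end MvPolynomial

theorem stmt_7_general
    (p : ℕ) (hp : p.Prime) (n : ℕ)
    (𝔽 : Type*) [Field 𝔽] [Fintype 𝔽] (hF : Fintype.card 𝔽 = p ^ n)
    (K : Type*) [Field K] [CharP K p]
    (ι : 𝔽 →+* K)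
    (r : ℕ) (hr : r < p ^ n) :
    Submodule.span K
        {P : MvPolynomial (Fin 2) K |
          ∃ a : 𝔽, P = (MvPolynomial.C (ι a) * X 0 + X 1) ^ r} =
      Submodule.span K
        {P : MvPolynomial (Fin 2) K |
          ∃ i : ℕ, i ≤ r ∧ (∀ j : ℕ, i / p ^ j % p ≤ r / p ^ j % p) ∧
            P = X 0 ^ i * X 1 ^ (r - i)} := by
  have choose_ne_zero {i : ℕ} : (r.choose i : K) ≠ 0 ↔ ∀ j, i / p ^ j % p ≤ r / p ^ j % p := by
    rw [ne_eq, CharP.cast_eq_zero_iff K p, hp.not_dvd_choose_iff_forall_digit_le]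
  apply le_antisymm <;> rw [Submodule.span_le]
  · rintro _ ⟨a, rfl⟩
    rw [SetLike.mem_coe, C_mul_X_add_X_pow]
    refine Submodule.sum_mem _ fun m hm => ?_
    by_cases hdig : ∀ j, m / p ^ j % p ≤ r / p ^ j % p
    · exact Submodule.smul_mem _ _
        (Submodule.subset_span ⟨m, mem_range_succ_iff.mp hm, hdig, rfl⟩)
    · rw [of_not_not (mt choose_ne_zero.mp hdig), mul_zero, zero_smul]
      exact Submodule.zero_mem _
  · rintro _ ⟨i, hir, hdig, rfl⟩
    obtain ⟨c, hc⟩ := exists_sum_mul_pow_eq_ite ι.injective (i := i) (by omega)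
    have hcomb := sum_smul_C_mul_X_add_X_pow ι c (0 : Fin 2) 1 hir
      (fun m hm => hc m (by omega))
    refine (Submodule.smul_mem_iff _ (choose_ne_zero.mpr hdig)).mp ?_
    rw [← hcomb]
    exact Submodule.sum_mem _ fun a _ => Submodule.smul_mem _ _ (Submodule.subset_span ⟨a, rfl⟩)

/-- The `K`-span of the polynomials `(ι a • X + Y)^r`, as `a`
ranges over the finite field `𝔽` of cardinality `p^n`, equals the span `W` of
the monomials `X^i Y^(r-i)` for `i` admissible (base-`p` digits of `i` bounded
by those of `r`). -/
theorem stmt_7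
    (p : ℕ) (hp : p.Prime) (n : ℕ) (hn : 1 ≤ n)
    (𝔽 : Type*) [Field 𝔽] [Fintype 𝔽] (hF : Fintype.card 𝔽 = p ^ n)
    (K : Type*) [Field K] [CharP K p]
    (ι : 𝔽 →+* K)
    (r : ℕ) (hr : r < p ^ n) :
    Submodule.span K
        {P : MvPolynomial (Fin 2) K |
          ∃ a : 𝔽, P = (MvPolynomial.C (ι a) * X 0 + X 1) ^ r} =
      Submodule.span K
        {P : MvPolynomial (Fin 2) K |
          ∃ i : ℕ, i ≤ r ∧ (∀ j : ℕ, i / p ^ j % p ≤ r / p ^ j % p) ∧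
            P = X 0 ^ i * X 1 ^ (r - i)} :=
  stmt_7_general p hp n 𝔽 hF K ι r hr
end

section
/- If v ∈ W is not a scalar multiple of X^r, then the K-linear span of the set {u_a(v) : a ∈ 𝔽} has dimension at least 2 over K. -/
/-!
Write `v = ∑ c_i X^i Y^(r-i)`. If the `u_a v` spanned a space of dimension at most one, each
`u_a v` would be a multiple `d_a • v`; comparing the lowest nonzero coefficient of `v` on both
sides gives `d_a = 1`, so `v` is fixed by every `u_a`. The coefficient of `X^j Y^(r-j)` in
`u_a v - v` is `∑_{i<j} C(r-i, j-i) c_i a^(j-i)`, a polynomial in `a` of degree `≤ r < q`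
vanishing on all of `𝔽`, so `C(r-i, j-i) c_i = 0` whenever `i < j ≤ r`. Choosing `j - i = p^t`
with `p^t` the leading power of `p` in `r - i`, Lucas' theorem makes `C(r-i, p^t)` the leading
base-`p` digit of `r - i`, hence nonzero in `K`; thus `c_i = 0` for all `i < r` and `v` is a
multiple of `X^r`.
-/

open MvPolynomial

theorem Nat.choose_pow_modEq_div_pow {p : ℕ} [Fact p.Prime] (m t : ℕ) :
    m.choose (p ^ t) ≡ m / p ^ t [MOD p] := by
  induction t generalizing m with
  | zero => simp [Nat.ModEq.refl]
  | succ t ih =>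
    have h :=
      Choose.choose_modEq_choose_mod_mul_choose_div_nat (p := p) (n := m) (k := p ^ (t + 1))
    rw [pow_succ, Nat.mul_mod_left, Nat.mul_div_cancel _ (Fact.out : p.Prime).pos,
      Nat.choose_zero_right, one_mul, ← pow_succ] at h
    rw [pow_succ', ← Nat.div_div_eq_div_mul, ← pow_succ']
    exact h.trans (ih (m / p))

theorem Nat.cast_choose_pow_log_ne_zero (K : Type*) [Semiring K] {p : ℕ} [Fact p.Prime]
    [CharP K p] {m : ℕ} (hm : m ≠ 0) : (m.choose (p ^ Nat.log p m) : K) ≠ 0 := by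
  have hp : 1 < p := (Fact.out : p.Prime).one_lt
  rw [Ne, CharP.cast_eq_zero_iff K p, ((Nat.choose_pow_modEq_div_pow m _).dvd_iff dvd_rfl)]
  refine Nat.not_dvd_of_pos_of_lt (Nat.div_pos (Nat.pow_log_le_self p hm) (by positivity)) ?_
  rw [Nat.div_lt_iff_lt_mul (by positivity), ← pow_succ']
  exact Nat.lt_pow_succ_log_self hp m

theorem Submodule.exists_smul_eq_of_rank_lt_two {K V : Type*} [DivisionRing K] [AddCommGroup V]
    [Module K V] {s : Submodule K V} (hs : Module.rank K s < 2) {v w : V} (hv : v ∈ s)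
    (hv0 : v ≠ 0) (hw : w ∈ s) : ∃ d : K, w = d • v := by
  have hs1 : Module.rank K s ≤ 1 :=
    Order.le_of_lt_succ (by rw [← Nat.cast_one, Cardinal.succ_natCast]; exact_mod_cast hs)
  obtain ⟨u, -, hsu⟩ := (rank_submodule_le_one_iff s).1 hs1
  obtain ⟨a, rfl⟩ := Submodule.mem_span_singleton.1 (hsu hv)
  obtain ⟨b, rfl⟩ := Submodule.mem_span_singleton.1 (hsu hw)
  have ha : a ≠ 0 := by rintro rfl; exact hv0 (zero_smul K u)
  exact ⟨b * a⁻¹, by rw [smul_smul, inv_mul_cancel_right₀ ha]⟩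

namespace BinaryForm

open Finset

section CommSemiring

variable {R : Type*} [CommSemiring R]

noncomputable def bidegree (r i : ℕ) : Fin 2 →₀ ℕ :=
  Finsupp.single 0 i + Finsupp.single 1 (r - i)

theorem bidegree_injective (r : ℕ) : Function.Injective (bidegree r) := fun i j h => by
  simpa [bidegree] using DFunLike.congr_fun h 0

theorem X_pow_mul_X_pow_eq_monomial (r i : ℕ) :
    (X 0 ^ i * X 1 ^ (r - i) : MvPolynomial (Fin 2) R) = monomial (bidegree r i) 1 := by
  rw [X_pow_eq_monomial, X_pow_eq_monomial, monomial_mul, one_mul, bidegree]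

theorem coeff_bidegree_monomial_bidegree (r i j : ℕ) (a : R) :
    coeff (bidegree r j) (monomial (bidegree r i) a) = if i = j then a else 0 := by
  simp only [coeff_monomial, (bidegree_injective r).eq_iff]

variable (R) in
noncomputable def binaryForms (r : ℕ) : Submodule R (MvPolynomial (Fin 2) R) :=
  Submodule.span R {P | ∃ i ≤ r, P = X 0 ^ i * X 1 ^ (r - i)}

noncomputable def shear (c : R) : MvPolynomial (Fin 2) R →ₐ[R] MvPolynomial (Fin 2) R :=
  aeval ![X 0, C c * X 0 + X 1]

theorem shear_zero : shear (0 : R) = AlgHom.id R _ := by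
  ext i
  fin_cases i <;> simp [shear]

theorem shear_X_pow_mul_X_pow (c : R) (r i : ℕ) :
    shear c (X 0 ^ i * X 1 ^ (r - i)) =
      ∑ k ∈ range (r - i + 1), monomial (bidegree r (i + k)) (c ^ k * (r - i).choose k) := by
  simp only [shear, map_mul, map_pow, aeval_X, Matrix.cons_val_zero, Matrix.cons_val_one,
    add_pow, mul_sum]
  refine sum_congr rfl fun k _ => ?_
  rw [← mul_one (c ^ k * _), ← C_mul_monomial, ← X_pow_mul_X_pow_eq_monomial, Nat.sub_add_eq,
    map_mul, map_pow, map_natCast]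
  ring

theorem coeff_shear_X_pow_mul_X_pow (c : R) (r i j : ℕ) :
    coeff (bidegree r j) (shear c (X 0 ^ i * X 1 ^ (r - i))) =
      if i ≤ j then ((r - i).choose (j - i) : R) * c ^ (j - i) else 0 := by
  simp only [shear_X_pow_mul_X_pow, coeff_sum, coeff_bidegree_monomial_bidegree]
  split_ifs with hij
  · rw [sum_congr rfl fun k _ => if_congr (show i + k = j ↔ k = j - i by omega) rfl rfl,
      sum_ite_eq', mul_comm]
    split_ifs with hji
    · rfl
    · rw [Nat.choose_eq_zero_of_lt (by rw [mem_range] at hji; omega), Nat.cast_zero, zero_mul]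
  · exact sum_eq_zero fun k _ => if_neg (by omega)

theorem coeff_shear_of_mem_binaryForms (c : R) {r : ℕ} {v : MvPolynomial (Fin 2) R}
    (hv : v ∈ binaryForms R r) (j : ℕ) :
    coeff (bidegree r j) (shear c v) =
      ∑ i ∈ range (j + 1),
        ((r - i).choose (j - i) : R) * c ^ (j - i) * coeff (bidegree r i) v := by
  induction hv using Submodule.span_induction with
  | mem w hw =>
    obtain ⟨i, -, rfl⟩ := hw
    rw [coeff_shear_X_pow_mul_X_pow]
    simp only [X_pow_mul_X_pow_eq_monomial, coeff_bidegree_monomial_bidegree, mul_ite, mul_one,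
      mul_zero, sum_ite_eq, mem_range, Nat.lt_succ_iff]
  | zero => simp
  | add x y _ _ hx hy => simp only [map_add, coeff_add, hx, hy, mul_add, sum_add_distrib]
  | smul a x _ hx =>
    simp only [map_smul, coeff_smul, hx, smul_eq_mul, mul_sum]
    exact sum_congr rfl fun _ _ => by ring

theorem eq_sum_monomial_of_mem_binaryForms {r : ℕ} {v : MvPolynomial (Fin 2) R}
    (hv : v ∈ binaryForms R r) :
    v = ∑ i ∈ range (r + 1), monomial (bidegree r i) (coeff (bidegree r i) v) := by
  induction hv using Submodule.span_induction with
  | mem w hw =>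
    obtain ⟨i, hi, rfl⟩ := hw
    simp only [X_pow_mul_X_pow_eq_monomial, coeff_bidegree_monomial_bidegree]
    rw [sum_congr rfl fun k _ => apply_ite (monomial (bidegree r k)) _ _ _]
    simp [sum_ite_eq, hi]
  | zero => simp
  | add x y _ _ hx hy =>
    rw [sum_congr rfl fun i _ => by rw [coeff_add, map_add], sum_add_distrib, ← hx, ← hy]
  | smul a x _ hx =>
    rw [sum_congr rfl fun i _ => by rw [coeff_smul, ← smul_monomial], ← smul_sum, ← hx]

end CommSemiring

section Field

variable {K : Type*} [Field K]

theorem choose_mul_coeff_eq_zero_of_shear_eq_self {ι : Type*} [Fintype ι] {x : ι → K}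
    (hx : Function.Injective x) {r : ℕ} (hr : r < Fintype.card ι) {v : MvPolynomial (Fin 2) K}
    (hv : v ∈ binaryForms K r) (hfix : ∀ a, shear (x a) v = v) {i j : ℕ} (hij : i < j)
    (hj : j ≤ r) : ((r - i).choose (j - i) : K) * coeff (bidegree r i) v = 0 := by
  set Q : Polynomial K := ∑ i' ∈ range j,
    Polynomial.monomial (j - i') (((r - i').choose (j - i') : K) * coeff (bidegree r i') v)
  have hQ : Q = 0 := by
    refine Polynomial.eq_zero_of_natDegree_lt_card_of_eval_eq_zero Q hx (fun a => ?_) ?_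
    · have h := coeff_shear_of_mem_binaryForms (x a) hv j
      rw [hfix, sum_range_succ, Nat.sub_self, Nat.choose_zero_right, Nat.cast_one, pow_zero,
        one_mul, one_mul, right_eq_add] at h
      simp only [Q, Polynomial.eval_finsetSum, Polynomial.eval_monomial, ← h]
      exact sum_congr rfl fun _ _ => by ring
    · refine (Polynomial.natDegree_sum_le_of_forall_le _ _ fun i' _ => ?_).trans_lt
        (hj.trans_lt hr)
      exact (Polynomial.natDegree_monomial_le _).trans (by omega)
  have h := congrArg (Polynomial.coeff · (j - i)) hQ
  simp only [Q, Polynomial.finsetSum_coeff, Polynomial.coeff_monomial, Polynomial.coeff_zero] at h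
  rwa [sum_eq_single_of_mem i (mem_range.2 hij) fun i' hi' hne => if_neg (by
    rw [mem_range] at hi'; omega), if_pos rfl] at h

theorem eq_smul_X_pow_of_shear_eq_self {p : ℕ} [Fact p.Prime] [CharP K p] {ι : Type*}
    [Fintype ι] {x : ι → K} (hx : Function.Injective x) {r : ℕ} (hr : r < Fintype.card ι)
    {v : MvPolynomial (Fin 2) K} (hv : v ∈ binaryForms K r) (hfix : ∀ a, shear (x a) v = v) :
    v = coeff (bidegree r r) v • X 0 ^ r := by
  have hlow : ∀ i < r, coeff (bidegree r i) v = 0 := by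
    intro i hi
    have hle : p ^ Nat.log p (r - i) ≤ r - i := Nat.pow_log_le_self p (by omega)
    have h := choose_mul_coeff_eq_zero_of_shear_eq_self hx hr hv hfix
      (i := i) (j := i + p ^ Nat.log p (r - i))
      (Nat.lt_add_of_pos_right (pow_pos (Fact.out : p.Prime).pos _)) (by omega)
    rw [Nat.add_sub_cancel_left] at h
    exact (mul_eq_zero.1 h).resolve_left (Nat.cast_choose_pow_log_ne_zero K (by omega))
  conv_lhs => rw [eq_sum_monomial_of_mem_binaryForms hv]
  rw [sum_range_succ, sum_eq_zero fun i hi => by rw [hlow i (mem_range.1 hi), map_zero],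
    zero_add]
  simp [bidegree, X_pow_eq_monomial, smul_monomial]

theorem eq_one_of_shear_eq_smul {r : ℕ} {v : MvPolynomial (Fin 2) K} (hv : v ∈ binaryForms K r)
    (hv0 : v ≠ 0) {c d : K} (h : shear c v = d • v) : d = 1 := by
  classical
  have hex : ∃ i, coeff (bidegree r i) v ≠ 0 := by
    by_contra! hzero
    exact hv0 (by simpa [hzero] using eq_sum_monomial_of_mem_binaryForms hv)
  have hlow : ∀ i < Nat.find hex, coeff (bidegree r i) v = 0 := fun i hi =>
    not_not.1 (Nat.find_min hex hi)
  have hcoeff := coeff_shear_of_mem_binaryForms c hv (Nat.find hex)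
  rw [sum_range_succ, sum_eq_zero fun i hi => by rw [hlow i (mem_range.1 hi), mul_zero],
    h, coeff_smul, smul_eq_mul, Nat.sub_self, pow_zero, Nat.choose_zero_right, Nat.cast_one,
    one_mul, one_mul, zero_add] at hcoeff
  exact mul_right_cancel₀ (Nat.find_spec hex) (hcoeff.trans (one_mul _).symm)

end Field

end BinaryForm

open BinaryForm

theorem stmt_8_general
    (p : ℕ) (hp : p.Prime) (n : ℕ)
    (𝔽 : Type*) [Field 𝔽] [Fintype 𝔽] (hF : Fintype.card 𝔽 = p ^ n)
    (K : Type*) [Field K] [CharP K p]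
    (ι : 𝔽 →+* K)
    (r : ℕ) (hr : r < p ^ n)
    (v : MvPolynomial (Fin 2) K)
    (hv : v ∈ Submodule.span K
        {P : MvPolynomial (Fin 2) K |
          ∃ i : ℕ, i ≤ r ∧ (∀ j : ℕ, i / p ^ j % p ≤ r / p ^ j % p) ∧
            P = X 0 ^ i * X 1 ^ (r - i)})
    (hvX : ¬ ∃ c : K, v = c • (X 0 : MvPolynomial (Fin 2) K) ^ r) :
    2 ≤ Module.rank K
      (Submodule.span K
        {w : MvPolynomial (Fin 2) K |
          ∃ a : 𝔽, w = aeval ![X 0, MvPolynomial.C (ι a) * X 0 + X 1] v}) := by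
  have : Fact p.Prime := ⟨hp⟩
  have hvr : v ∈ binaryForms K r :=
    Submodule.span_mono (by rintro P ⟨i, hi, -, rfl⟩; exact ⟨i, hi, rfl⟩) hv
  have hv0 : v ≠ 0 := by
    rintro rfl
    exact hvX ⟨0, (zero_smul K _).symm⟩
  by_contra! hrank
  have hmem (a : 𝔽) :
      shear (ι a) v ∈ Submodule.span K {w | ∃ a : 𝔽, w = shear (ι a) v} :=
    Submodule.subset_span ⟨a, rfl⟩
  have hfix (a : 𝔽) : shear (ι a) v = v := by
    have hv_mem := hmem 0
    rw [map_zero, shear_zero, AlgHom.id_apply] at hv_mem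
    obtain ⟨d, hd⟩ := Submodule.exists_smul_eq_of_rank_lt_two hrank hv_mem hv0 (hmem a)
    rw [hd, eq_one_of_shear_eq_smul hvr hv0 hd, one_smul]
  exact hvX ⟨_, eq_smul_X_pow_of_shear_eq_self ι.injective (hF ▸ hr) hvr hfix⟩

/-- If `v ∈ W` is not a scalar multiple of `X^r`, then the
`K`-span of `{u_a v : a ∈ 𝔽}` has dimension at least `2`, where `u_a` is the
`K`-algebra endomorphism of `K[X,Y]` with `u_a X = X`, `u_a Y = ι a • X + Y`. -/
theorem stmt_8
    (p : ℕ) (hp : p.Prime) (n : ℕ) (hn : 1 ≤ n)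
    (𝔽 : Type*) [Field 𝔽] [Fintype 𝔽] (hF : Fintype.card 𝔽 = p ^ n)
    (K : Type*) [Field K] [CharP K p]
    (ι : 𝔽 →+* K)
    (r : ℕ) (hr : r < p ^ n)
    (v : MvPolynomial (Fin 2) K)
    (hv : v ∈ Submodule.span K
        {P : MvPolynomial (Fin 2) K |
          ∃ i : ℕ, i ≤ r ∧ (∀ j : ℕ, i / p ^ j % p ≤ r / p ^ j % p) ∧
            P = X 0 ^ i * X 1 ^ (r - i)})
    (hvX : ¬ ∃ c : K, v = c • (X 0 : MvPolynomial (Fin 2) K) ^ r) :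
    2 ≤ Module.rank K
      (Submodule.span K
        {w : MvPolynomial (Fin 2) K |
          ∃ a : 𝔽, w = aeval ![X 0, MvPolynomial.C (ι a) * X 0 + X 1] v}) :=
  stmt_8_general p hp n 𝔽 hF K ι r hr v hv hvX
end

section
/- If v ∈ W is not a scalar multiple of Y^r, then the K-linear span of the set {ū_a(v) : a ∈ 𝔽} has dimension at least 2 over K. -/
open MvPolynomial

/-- If `v ∈ W` is not a scalar multiple of `Y^r`, then the
`K`-span of `{ū_a v : a ∈ 𝔽}` has dimension at least `2`, where `ū_a` is the
`K`-algebra endomorphism of `K[X,Y]` with `ū_a X = X + ι a • Y`, `ū_a Y = Y`. -/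
theorem stmt_9
    (p : ℕ) (hp : p.Prime) (n : ℕ) (hn : 1 ≤ n)
    (𝔽 : Type*) [Field 𝔽] [Fintype 𝔽] (hF : Fintype.card 𝔽 = p ^ n)
    (K : Type*) [Field K] [CharP K p]
    (ι : 𝔽 →+* K)
    (r : ℕ) (hr : r < p ^ n)
    (v : MvPolynomial (Fin 2) K)
    (hv : v ∈ Submodule.span K
        {P : MvPolynomial (Fin 2) K |
          ∃ i : ℕ, i ≤ r ∧ (∀ j : ℕ, i / p ^ j % p ≤ r / p ^ j % p) ∧
            P = X 0 ^ i * X 1 ^ (r - i)})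
    (hvY : ¬ ∃ c : K, v = c • (X 1 : MvPolynomial (Fin 2) K) ^ r) :
    2 ≤ Module.rank K
      (Submodule.span K
        {w : MvPolynomial (Fin 2) K |
          ∃ a : 𝔽, w = aeval ![X 0 + MvPolynomial.C (ι a) * X 1, X 1] v}) := by
  classical
  haveI : Fact p.Prime := ⟨hp⟩
  have fext : ∀ d e : Fin 2 →₀ ℕ, d 0 = e 0 → d 1 = e 1 → d = e := by
    intro d e h0 h1
    ext i
    match i with
    | 0 => exact h0
    | 1 => exact h1
  -- helper: degree of a `Fin 2` finsupp
  have deg2 : ∀ d : Fin 2 →₀ ℕ, d.degree = d 0 + d 1 := by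
    intro d
    rw [Finsupp.degree_apply, Finset.sum_subset (Finset.subset_univ _) ?_, Fin.sum_univ_two]
    intro i _ hi
    simpa using (Finsupp.notMem_support_iff.mp hi)
  -- the endomorphisms
  set u : 𝔽 → (MvPolynomial (Fin 2) K →ₐ[K] MvPolynomial (Fin 2) K) :=
    fun a => aeval ![X 0 + C (ι a) * X 1, X 1] with hu
  have hu0 : u 0 = AlgHom.id K _ := by
    apply algHom_ext; intro i; fin_cases i <;> simp [hu]
  have hucomp : ∀ a b : 𝔽, (u a).comp (u b) = u (a + b) := by
    intro a b
    apply algHom_ext; intro i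
    fin_cases i <;> simp [hu, map_add, add_mul, add_assoc]
  have vne : v ≠ 0 := by
    intro h; exact hvY ⟨0, by simp [h]⟩
  -- homogeneity of v
  have hhom : v.IsHomogeneous r := by
    have hle : Submodule.span K
        {P : MvPolynomial (Fin 2) K |
          ∃ i : ℕ, i ≤ r ∧ (∀ j : ℕ, i / p ^ j % p ≤ r / p ^ j % p) ∧
            P = X 0 ^ i * X 1 ^ (r - i)} ≤ homogeneousSubmodule (Fin 2) K r := by
      rw [Submodule.span_le]
      rintro P ⟨i, hi, -, rfl⟩
      rw [SetLike.mem_coe, mem_homogeneousSubmodule]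
      have := ((isHomogeneous_X K (0 : Fin 2)).pow i).mul
        ((isHomogeneous_X K (1 : Fin 2)).pow (r - i))
      simpa [Nat.add_sub_cancel' hi] using this
    exact (mem_homogeneousSubmodule _ _).mp (hle hv)
  have hsupp : ∀ d ∈ v.support, d 0 + d 1 = r := by
    intro d hd
    by_contra hne
    exact (mem_support_iff.mp hd) (hhom.coeff_eq_zero (by rw [deg2]; exact hne))
  -- the key claim: some translate is not a multiple of v
  have key : ∃ a : 𝔽, ∀ c : K, aeval ![X 0 + C (ι a) * X 1, X 1] v ≠ c • v := by
    by_contra hcon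
    push_neg at hcon
    -- every translate fixes v
    have hinv : ∀ a : 𝔽, u a v = v := by
      intro a
      obtain ⟨c, hc⟩ := hcon a
      have hc' : u a v = c • v := hc
      have hiter : ∀ k : ℕ, u (k • a) v = c ^ k • v := by
        intro k
        induction k with
        | zero => simp [zero_nsmul, hu0]
        | succ k ih =>
          have h1 : (k + 1) • a = a + k • a := by
            rw [add_nsmul, one_nsmul, add_comm]
          rw [h1, ← hucomp a (k • a), AlgHom.comp_apply, ih, map_smul, hc',
            smul_smul, ← pow_succ]
      have hq0 : (Fintype.card 𝔽) • a = 0 := card_nsmul_eq_zero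
      have hqv := hiter (Fintype.card 𝔽)
      rw [hq0, hu0] at hqv
      have hcq : c ^ (p ^ n) = 1 := by
        rw [hF] at hqv
        by_contra hne
        have h0 : (c ^ (p ^ n) - 1) • v = 0 := by
          rw [sub_smul, one_smul, ← hqv]
          exact sub_self _
        rcases smul_eq_zero.mp h0 with h | h
        · exact hne (sub_eq_zero.mp h)
        · exact vne h
      have hc1 : c = 1 := by
        have hsub : (c - 1) ^ (p ^ n) = c ^ (p ^ n) - 1 ^ (p ^ n) :=
          sub_pow_char_pow c 1 n
        rw [hcq, one_pow, sub_self] at hsub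
        have h0 : c - 1 = 0 :=
          pow_eq_zero_iff (pow_ne_zero_iff (Nat.one_le_iff_ne_zero.mp hn) |>.mpr
            hp.ne_zero : p ^ n ≠ 0) |>.mp hsub
        exact sub_eq_zero.mp h0
      rw [hc1, one_smul] at hc'
      exact hc'
    -- now derive a contradiction with hvY
    set f : Polynomial K := aeval ![Polynomial.X, (1 : Polynomial K)] v with hf
    have hfsum : f = ∑ d ∈ v.support, Polynomial.C (coeff d v) * Polynomial.X ^ (d 0) := by
      rw [hf]
      conv_lhs => rw [v.as_sum]
      rw [map_sum]
      refine Finset.sum_congr rfl fun d _ => ?_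
      rw [aeval_monomial, Finsupp.prod_pow, Fin.prod_univ_two]
      simp [Polynomial.algebraMap_eq]
    have hcoeff : ∀ i : ℕ,
        f.coeff i = ∑ d ∈ v.support, (if i = d 0 then coeff d v else 0) := by
      intro i
      rw [hfsum, Polynomial.finset_sum_coeff]
      refine Finset.sum_congr rfl fun d _ => ?_
      rw [Polynomial.coeff_C_mul, Polynomial.coeff_X_pow, mul_ite, mul_one, mul_zero]
    have hfc : ∀ d : Fin 2 →₀ ℕ, d 0 + d 1 = r → f.coeff (d 0) = coeff d v := by
      intro d hd
      rw [hcoeff]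
      have hsum : (∑ b ∈ v.support, (if d 0 = b 0 then coeff b v else 0))
          = (if d 0 = d 0 then coeff d v else 0) := by
        refine Finset.sum_eq_single d (fun b hb hbd => ?_) (fun hd' => ?_)
        · rcases eq_or_ne (d 0) (b 0) with h0 | h0
          · exfalso
            apply hbd
            have hb2 := hsupp b hb
            exact fext b d h0.symm (by omega)
          · rw [if_neg h0]
        · rw [if_pos rfl]
          exact notMem_support_iff.mp hd'
      rw [hsum, if_pos rfl]
    have hdeg : f.natDegree ≤ r := by
      refine Polynomial.natDegree_le_iff_coeff_eq_zero.mpr fun m hm => ?_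
      rw [hcoeff]
      refine Finset.sum_eq_zero fun d hd => ?_
      have := hsupp d hd
      rw [if_neg (by omega)]
    have heval : ∀ t : K, f.eval t = aeval ![t, (1 : K)] v := by
      intro t
      have hcomp : ((Polynomial.aeval t).comp (aeval ![Polynomial.X, (1 : Polynomial K)]) :
          MvPolynomial (Fin 2) K →ₐ[K] K) = aeval ![t, 1] := by
        apply algHom_ext; intro i; fin_cases i <;> simp
      have := AlgHom.congr_fun hcomp v
      simpa [Polynomial.coe_aeval_eq_eval] using this
    have hshift : ∀ b : 𝔽, aeval ![(ι b : K), (1 : K)] v = aeval ![(0 : K), (1 : K)] v := by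
      intro b
      have hcomp2 : ((aeval ![(0 : K), (1 : K)]).comp (u b) :
          MvPolynomial (Fin 2) K →ₐ[K] K) = aeval ![(ι b : K), 1] := by
        apply algHom_ext; intro i; fin_cases i <;> simp [hu]
      calc aeval ![(ι b : K), (1 : K)] v = aeval ![(0 : K), (1 : K)] (u b v) :=
            (AlgHom.congr_fun hcomp2 v).symm
        _ = aeval ![(0 : K), (1 : K)] v := by rw [hinv b]
    set g : Polynomial K := f - Polynomial.C (f.coeff 0) with hg
    have hgz : g = 0 := by
      refine Polynomial.eq_zero_of_natDegree_lt_card_of_eval_eq_zero g ι.injective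
        (fun b => ?_) ?_
      · rw [hg, Polynomial.eval_sub, Polynomial.eval_C, Polynomial.coeff_zero_eq_eval_zero,
          heval (ι b), heval 0, hshift b, sub_self]
      · rw [hF]
        have h1 : g.natDegree ≤ r :=
          le_trans (Polynomial.natDegree_sub_le _ _)
            (by simp [hdeg, Polynomial.natDegree_C])
        omega
    have hfC : f = Polynomial.C (f.coeff 0) := by
      have := sub_eq_zero.mp hgz
      exact this
    apply hvY
    refine ⟨f.coeff 0, MvPolynomial.ext _ _ fun d => ?_⟩
    rw [coeff_smul, coeff_X_pow, smul_eq_mul, mul_ite, mul_one, mul_zero]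
    by_cases hd : d 0 + d 1 = r
    · by_cases hd0 : d 0 = 0
      · have hds : Finsupp.single (1 : Fin 2) r = d :=
          fext _ _ (by simp [Finsupp.single_apply]; omega)
            (by simp [Finsupp.single_apply]; omega)
        rw [if_pos hds, ← hfc d hd, hd0]
      · have hds : ¬(Finsupp.single (1 : Fin 2) r = d) := by
          intro h
          apply hd0
          rw [← h]
          simp
        rw [if_neg hds, ← hfc d hd, hfC, Polynomial.coeff_C, if_neg hd0]
    · have h1 : coeff d v = 0 := hhom.coeff_eq_zero (by rw [deg2]; exact hd)
      have hds : ¬(Finsupp.single (1 : Fin 2) r = d) := by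
        intro h
        apply hd
        rw [← h]
        simp [Finsupp.single_apply]
      rw [h1, if_neg hds]
  obtain ⟨a, ha⟩ := key
  -- assemble the rank bound
  set s : Set (MvPolynomial (Fin 2) K) :=
    {w : MvPolynomial (Fin 2) K |
      ∃ a : 𝔽, w = aeval ![X 0 + MvPolynomial.C (ι a) * X 1, X 1] v} with hs
  set y : MvPolynomial (Fin 2) K := aeval ![X 0 + C (ι a) * X 1, X 1] v with hy
  have hxs : v ∈ s := by
    refine ⟨0, ?_⟩
    have h0 : u 0 v = v := by rw [hu0]; rfl
    exact h0.symm
  have hys : y ∈ s := ⟨a, rfl⟩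
  have hli : LinearIndependent K ![v, y] :=
    (LinearIndependent.pair_iff' vne).mpr (fun c heq => ha c heq.symm)
  have hmem : ∀ i : Fin 2, (![v, y] i) ∈ Submodule.span K s := by
    intro i; fin_cases i
    · exact Submodule.subset_span hxs
    · exact Submodule.subset_span hys
  have hli2 : LinearIndependent K (fun i : Fin 2 => (⟨![v, y] i, hmem i⟩ :
      Submodule.span K s)) := by
    apply LinearIndependent.of_comp (Submodule.span K s).subtype
    exact hli
  have h2 := hli2.cardinal_lift_le_rank
  rw [Cardinal.lift_uzero] at h2
  simpa using h2
end

section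
/- If v ∈ W is nonzero, then there exists a ∈ 𝔽 such that the coefficient of the monomial X^r in the polynomial u_a(v) is nonzero. -/
/-!
Every element of `W` is a binary form of degree `r`. For such a form `φ`, the substitution
`Y ↦ cX + Y` followed by reading off the coefficient of `X^r` amounts to evaluating at
`(1, 0)`, so that coefficient is `φ(1, c) = g(c)` for the dehomogenization `g(Y) = φ(1, Y)`.
Since `φ ≠ 0`, `g` is a nonzero polynomial of degree at most `r < q`, so it cannot vanish at
the `q` distinct points `ι a`.
-/

open MvPolynomial

namespace MvPolynomial

lemma IsHomogeneous.coeff_single_eq_eval {R σ : Type*} [CommSemiring R] [DecidableEq σ]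
    {φ : MvPolynomial σ R} {n : ℕ} (hφ : φ.IsHomogeneous n) (i : σ) :
    coeff (Finsupp.single i n) φ = eval (Pi.single i 1) φ := by
  rw [eval_eq]
  refine (Finset.sum_eq_single (Finsupp.single i n) (fun m hm hmi => ?_) (fun h => ?_)).trans ?_
    |>.symm
  · obtain ⟨j, hj, hji⟩ : ∃ j ∈ m.support, j ≠ i := by
      by_contra! h
      have hm_eq : m = Finsupp.single i (m i) :=
        Finsupp.eq_single_iff.mpr ⟨fun j hj => Finset.mem_singleton.mpr (h j hj), rfl⟩
      have hdeg : m.degree = n := by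
        by_contra hd
        exact mem_support_iff.mp hm (hφ.coeff_eq_zero hd)
      rw [hm_eq, Finsupp.degree_single] at hdeg
      exact hmi (hdeg ▸ hm_eq)
    rw [Finset.prod_eq_zero hj (by simp [hji, Finsupp.mem_support_iff.mp hj]), mul_zero]
  · rw [notMem_support_iff.mp h, zero_mul]
  · rw [Finset.prod_eq_one fun j hj => ?_, mul_one]
    simp [Finset.mem_singleton.mp (Finsupp.support_single_subset hj)]

variable {R : Type*} [CommSemiring R]

lemma natDegree_aeval_one_X_le_totalDegree (φ : MvPolynomial (Fin 2) R) :
    (aeval ![1, Polynomial.X (R := R)] φ).natDegree ≤ φ.totalDegree := by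
  conv_lhs => rw [φ.as_sum, map_sum]
  refine Polynomial.natDegree_sum_le_of_forall_le _ _ fun m hm => ?_
  rw [aeval_monomial, Finsupp.prod_fintype _ _ (by simp), Fin.prod_univ_two]
  simp only [Matrix.cons_val_zero, Matrix.cons_val_one, one_pow, one_mul]
  calc _ ≤ m 1 := (Polynomial.natDegree_C_mul_le _ _).trans (Polynomial.natDegree_X_pow_le _)
    _ ≤ m.degree := by rw [Finsupp.degree_eq_sum, Fin.sum_univ_two]; omega
    _ ≤ φ.totalDegree := le_totalDegree hm

lemma IsHomogeneous.aeval_one_X_ne_zero {φ : MvPolynomial (Fin 2) R} {n : ℕ}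
    (hφ : φ.IsHomogeneous n) (h0 : φ ≠ 0) :
    MvPolynomial.aeval ![1, Polynomial.X (R := R)] φ ≠ 0 := by
  -- `Polynomial.homogenize` dehomogenizes in the second variable, hence the swap.
  have hswap : (MvPolynomial.aeval ![1, Polynomial.X (R := R)] φ).homogenize n =
      rename (Equiv.swap 0 1) φ := by
    refine Polynomial.homogenize_eq_of_isHomogeneous hφ.rename_isHomogeneous ?_
    rw [aeval_rename]
    congr 2
    funext i
    fin_cases i <;> rfl
  intro h
  rw [h, Polynomial.homogenize_zero, eq_comm,
    map_eq_zero_iff _ (rename_injective _ (Equiv.injective _))] at hswap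
  exact h0 hswap

noncomputable def shear (c : R) : MvPolynomial (Fin 2) R →ₐ[R] MvPolynomial (Fin 2) R :=
  aeval ![X 0, C c * X 0 + X 1]

lemma IsHomogeneous.coeff_single_shear {φ : MvPolynomial (Fin 2) R} {n : ℕ}
    (hφ : φ.IsHomogeneous n) (c : R) :
    coeff (Finsupp.single (0 : Fin 2) n) (shear c φ) =
      (MvPolynomial.aeval ![1, Polynomial.X (R := R)] φ).eval c := by
  have hshear : (shear c φ).IsHomogeneous n := by
    have h := hφ.aeval (τ := Fin 2) ![X 0, C c * X 0 + X 1] fun i => by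
      fin_cases i
      exacts [isHomogeneous_X _ _, (isHomogeneous_C_mul_X c 0).add (isHomogeneous_X _ 1)]
    rwa [one_mul] at h
  rw [hshear.coeff_single_eq_eval, shear, ← aeval_eq_eval, ← Polynomial.coe_aeval_eq_eval,
    comp_aeval_apply, comp_aeval_apply]
  congr 2
  funext i
  fin_cases i <;> simp

theorem IsHomogeneous.exists_coeff_single_shear_ne_zero {K ι : Type*} [CommRing K]
    [IsDomain K] [Fintype ι] {f : ι → K} (hf : f.Injective) {φ : MvPolynomial (Fin 2) K}
    {n : ℕ} (hφ : φ.IsHomogeneous n) (h0 : φ ≠ 0) (hn : n < Fintype.card ι) :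
    ∃ a, coeff (Finsupp.single (0 : Fin 2) n) (shear (f a) φ) ≠ 0 := by
  by_contra! h
  refine hφ.aeval_one_X_ne_zero h0 (Polynomial.eq_zero_of_natDegree_lt_card_of_eval_eq_zero _ hf
    (fun a => ?_) ?_)
  · rw [← hφ.coeff_single_shear, h a]
  · exact (natDegree_aeval_one_X_le_totalDegree φ).trans_lt (hφ.totalDegree_le.trans_lt hn)

theorem span_X_pow_mul_X_pow_le_homogeneousSubmodule (r : ℕ) (A : ℕ → Prop) :
    Submodule.span R
        {P : MvPolynomial (Fin 2) R | ∃ i, i ≤ r ∧ A i ∧ P = X 0 ^ i * X 1 ^ (r - i)} ≤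
      homogeneousSubmodule (Fin 2) R r := by
  refine Submodule.span_le.mpr ?_
  rintro _ ⟨i, hi, -, rfl⟩
  simpa [Nat.add_sub_cancel' hi] using
    (isHomogeneous_X_pow (R := R) 0 i).mul (isHomogeneous_X_pow 1 (r - i))

end MvPolynomial

theorem stmt_10_general
    (p : ℕ) (n : ℕ)
    (𝔽 : Type*) [Field 𝔽] [Fintype 𝔽] (hF : Fintype.card 𝔽 = p ^ n)
    (K : Type*) [Field K]
    (ι : 𝔽 →+* K)
    (r : ℕ) (hr : r < p ^ n)
    (v : MvPolynomial (Fin 2) K)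
    (hv : v ∈ Submodule.span K
        {P : MvPolynomial (Fin 2) K |
          ∃ i : ℕ, i ≤ r ∧ (∀ j : ℕ, i / p ^ j % p ≤ r / p ^ j % p) ∧
            P = X 0 ^ i * X 1 ^ (r - i)})
    (hv0 : v ≠ 0) :
    ∃ a : 𝔽,
      MvPolynomial.coeff (Finsupp.single (0 : Fin 2) r)
        (aeval ![X 0, MvPolynomial.C (ι a) * X 0 + X 1] v) ≠ 0 :=
  IsHomogeneous.exists_coeff_single_shear_ne_zero ι.injective
    (span_X_pow_mul_X_pow_le_homogeneousSubmodule r _ hv) hv0 (hF ▸ hr)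

/-- If `v ∈ W` is nonzero, then there is `a ∈ 𝔽` such that
the coefficient of `X^r` in `u_a v` is nonzero, where `u_a` is the `K`-algebra
endomorphism of `K[X,Y]` with `u_a X = X`, `u_a Y = ι a • X + Y`. -/
theorem stmt_10
    (p : ℕ) (hp : p.Prime) (n : ℕ) (hn : 1 ≤ n)
    (𝔽 : Type*) [Field 𝔽] [Fintype 𝔽] (hF : Fintype.card 𝔽 = p ^ n)
    (K : Type*) [Field K] [CharP K p]
    (ι : 𝔽 →+* K)
    (r : ℕ) (hr : r < p ^ n)
    (v : MvPolynomial (Fin 2) K)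
    (hv : v ∈ Submodule.span K
        {P : MvPolynomial (Fin 2) K |
          ∃ i : ℕ, i ≤ r ∧ (∀ j : ℕ, i / p ^ j % p ≤ r / p ^ j % p) ∧
            P = X 0 ^ i * X 1 ^ (r - i)})
    (hv0 : v ≠ 0) :
    ∃ a : 𝔽,
      MvPolynomial.coeff (Finsupp.single (0 : Fin 2) r)
        (aeval ![X 0, MvPolynomial.C (ι a) * X 0 + X 1] v) ≠ 0 :=
  stmt_10_general p n 𝔽 hF K ι r hr v hv hv0
end

section
/- For every integer n ≥ 0 and every x ∈ O, the matrix M = (ϖ^{−n}, ϖ^{−n−2}·x; 0, ϖ^n) of SL₂(F) satisfies: M ∈ Ū(𝔪)·α₀^{n+2}·K₀ if x is a unit of O; M ∈ Ū(𝔪)·α₀^{n+1}·K₀ if x ∈ 𝔪 ∖ 𝔪²; and M ∈ Ū(𝔪)·α₀^{n}·K₀ if x ∈ 𝔪², where α₀^m = diag(ϖ^{−m}, ϖ^m). -/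
/-!
Each case is an explicit factorisation. Put `p = ϖ` in `F`. If `x = ϖ ^ k * u` with `u` a unit and
`k ≤ 1`, then with `m = n + 2 - k`
`(p^{-n}, p^{-m} u; 0, p^n) = (1, 0; p^{n+m} u⁻¹, 1) · diag(p^{-m}, p^m) · (p^{m-n}, u; -u⁻¹, 0)`,
where the last factor lies in `SL₂(O)` because `m ≥ n`, and the first in `Ū(𝔪)` because `n + m ≥ 1`.
If `x = ϖ² y`, then simply `M = diag(p^{-n}, p^n) · (1, y; 0, 1)`.
-/

open Matrix Pointwise IsLocalRing

theorem IsLocalRing.exists_eq_mul_unit_of_notMem_sq {O : Type*} [CommRing O] [IsLocalRing O]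
    {ϖ x : O} (h : maximalIdeal O = Ideal.span {ϖ}) (hx : x ∈ maximalIdeal O)
    (hx2 : x ∉ maximalIdeal O ^ 2) : ∃ u : Oˣ, x = ϖ * u := by
  rw [h, Ideal.mem_span_singleton] at hx
  obtain ⟨c, rfl⟩ := hx
  by_cases hc : IsUnit c
  · exact ⟨hc.unit, rfl⟩
  obtain ⟨d, rfl⟩ : ϖ ∣ c := by
    rw [← Ideal.mem_span_singleton, ← h]
    exact (mem_maximalIdeal c).mpr hc
  rw [h, Ideal.span_singleton_pow, Ideal.mem_span_singleton] at hx2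
  exact absurd ⟨d, by ring⟩ hx2

namespace Matrix

section Field

variable {F : Type*} [Field F]

def diagZpow (p : F) (m : ℤ) : Matrix (Fin 2) (Fin 2) F := !![p ^ (-m), 0; 0, p ^ m]

theorem upperTriangular_eq_lower_mul_diagZpow_mul {p u : F} (hp : p ≠ 0) (hu : u ≠ 0) (n m : ℤ) :
    !![p ^ (-n), p ^ (-m) * u; 0, p ^ n] =
      !![1, 0; p ^ (n + m) * u⁻¹, 1] * diagZpow p m * !![p ^ (m - n), u; -u⁻¹, 0] := by
  ext i j
  fin_cases i <;> fin_cases j <;>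
    simp [diagZpow, Matrix.mul_apply, Fin.sum_univ_two, zpow_add₀ hp, zpow_sub₀ hp]
  all_goals field_simp
  ring

theorem upperTriangular_eq_diagZpow_mul {p : F} (hp : p ≠ 0) (n : ℤ) (y : F) :
    !![p ^ (-n), p ^ (-n - 2) * (p ^ 2 * y); 0, p ^ n] = diagZpow p n * !![1, y; 0, 1] := by
  have : p ^ (-n - 2) * p ^ 2 = p ^ (-n) := by
    rw [← zpow_natCast, ← zpow_add₀ hp]
    norm_num
  ext i j
  fin_cases i <;> fin_cases j <;> simp [diagZpow, ← mul_assoc, this]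

end Field

section IntegralSL2

variable (O : Type*) [CommRing O] (F : Type*) [Field F] [Algebra O F]

def integralSL2 : Set (Matrix (Fin 2) (Fin 2) F) :=
  {M | M.det = 1 ∧ ∀ i j, ∃ a : O, M i j = algebraMap O F a}

theorem antidiag_mem_integralSL2 (a : O) (u : Oˣ) :
    !![algebraMap O F a, algebraMap O F u; -algebraMap O F ↑u⁻¹, 0] ∈ integralSL2 O F := by
  refine ⟨by simp [det_fin_two_of, (u.isUnit.map (algebraMap O F)).ne_zero], ?_⟩
  intro i j
  fin_cases i <;> fin_cases j
  exacts [⟨a, rfl⟩, ⟨u, rfl⟩, ⟨-↑u⁻¹, by simp⟩, ⟨0, by simp⟩]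

theorem unipotent_mem_integralSL2 (y : O) : !![1, algebraMap O F y; 0, 1] ∈ integralSL2 O F := by
  refine ⟨by simp [det_fin_two_of], ?_⟩
  intro i j
  fin_cases i <;> fin_cases j
  exacts [⟨1, by simp⟩, ⟨y, rfl⟩, ⟨0, by simp⟩, ⟨1, by simp⟩]

end IntegralSL2

section LocalRing

variable (O : Type*) [CommRing O] [IsLocalRing O] (F : Type*) [Field F] [Algebra O F]

def lowerUnipotentMaxIdeal : Set (Matrix (Fin 2) (Fin 2) F) :=
  {M | ∃ z ∈ maximalIdeal O, M = !![1, 0; algebraMap O F z, 1]}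

theorem one_mem_lowerUnipotentMaxIdeal : (1 : Matrix (Fin 2) (Fin 2) F) ∈ lowerUnipotentMaxIdeal O F :=
  ⟨0, zero_mem _, by simp [one_fin_two]⟩

variable {O F}

theorem upperTriangular_mem_of_eq_pow_mul_unit {ϖ : O} (hϖ : ϖ ∈ maximalIdeal O)
    (hp : algebraMap O F ϖ ≠ 0) {n k : ℕ} (hk : k ≤ 1) {m : ℤ} (hm : m + k = n + 2) (u : Oˣ) :
    !![algebraMap O F ϖ ^ (-(n : ℤ)), algebraMap O F ϖ ^ (-(n : ℤ) - 2) * algebraMap O F (ϖ ^ k * u);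
        0, algebraMap O F ϖ ^ (n : ℤ)] ∈
      lowerUnipotentMaxIdeal O F * {diagZpow (algebraMap O F ϖ) m} * integralSL2 O F := by
  set p := algebraMap O F ϖ
  have hpow (a : ℕ) : p ^ a = algebraMap O F (ϖ ^ a) := (map_pow _ _ _).symm
  have hentry : p ^ (-(n : ℤ) - 2) * algebraMap O F (ϖ ^ k * u) = p ^ (-m) * algebraMap O F u := by
    rw [map_mul, ← hpow, ← zpow_natCast, ← mul_assoc, ← zpow_add₀ hp]
    congr 2
    omega
  have hlower : p ^ ((n : ℤ) + m) = algebraMap O F (ϖ ^ (2 * n + 2 - k)) := by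
    rw [← hpow, ← zpow_natCast]
    congr 1
    omega
  have hcorner : p ^ (m - n) = algebraMap O F (ϖ ^ (2 - k)) := by
    rw [← hpow, ← zpow_natCast]
    congr 1
    omega
  rw [hentry, upperTriangular_eq_lower_mul_diagZpow_mul hp (u.isUnit.map _).ne_zero n m, hlower,
    hcorner]
  refine Set.mul_mem_mul (Set.mul_mem_mul ⟨ϖ ^ (2 * n + 2 - k) * ↑u⁻¹, ?_, ?_⟩ rfl) ?_
  · exact Ideal.mul_mem_right _ _ (Ideal.pow_mem_of_mem _ hϖ _ (by omega))
  · simp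
  · simpa using antidiag_mem_integralSL2 O F (ϖ ^ (2 - k)) u

end LocalRing

end Matrix

/-- For `n ≥ 0` and `x ∈ O`, the matrix
`M = (ϖ^{−n}, ϖ^{−n−2}·x; 0, ϖ^n)` lies in `Ū(𝔪)·α₀^{n+2}·K₀` if `x` is a
unit, in `Ū(𝔪)·α₀^{n+1}·K₀` if `x ∈ 𝔪 ∖ 𝔪²`, and in `Ū(𝔪)·α₀^{n}·K₀` if
`x ∈ 𝔪²`, where `α₀^m = diag(ϖ^{−m}, ϖ^m)`. -/
theorem stmt_13
    (O : Type*) [CommRing O] [IsDomain O] [IsDiscreteValuationRing O]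
    (ϖ : O) (hϖ : Irreducible ϖ)
    (F : Type*) [Field F] [Algebra O F] [IsFractionRing O F]
    (n : ℕ) (x : O)
    (Ubar : Set (Matrix (Fin 2) (Fin 2) F))
    (hUbar : Ubar = {M | ∃ z ∈ IsLocalRing.maximalIdeal O, M = !![1, 0; algebraMap O F z, 1]})
    (K₀ : Set (Matrix (Fin 2) (Fin 2) F))
    (hK₀ : K₀ = {M | M.det = 1 ∧ ∀ i j, ∃ a : O, M i j = algebraMap O F a})
    (α₀ : ℤ → Matrix (Fin 2) (Fin 2) F)
    (hα₀ : ∀ m : ℤ, α₀ m = !![algebraMap O F ϖ ^ (-m), 0; 0, algebraMap O F ϖ ^ m])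
    (M : Matrix (Fin 2) (Fin 2) F)
    (hM : M = !![algebraMap O F ϖ ^ (-(n : ℤ)), algebraMap O F ϖ ^ (-(n : ℤ) - 2) * algebraMap O F x;
          0, algebraMap O F ϖ ^ (n : ℤ)]) :
    (IsUnit x → M ∈ Ubar * {α₀ ((n : ℤ) + 2)} * K₀) ∧
    (x ∈ IsLocalRing.maximalIdeal O → x ∉ IsLocalRing.maximalIdeal O ^ 2 →
      M ∈ Ubar * {α₀ ((n : ℤ) + 1)} * K₀) ∧
    (x ∈ IsLocalRing.maximalIdeal O ^ 2 → M ∈ Ubar * {α₀ (n : ℤ)} * K₀) := by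
  have hp : algebraMap O F ϖ ≠ 0 :=
    (map_ne_zero_iff _ (IsFractionRing.injective O F)).mpr hϖ.ne_zero
  have hϖm : ϖ ∈ maximalIdeal O := (mem_maximalIdeal ϖ).mpr hϖ.not_isUnit
  obtain rfl : α₀ = diagZpow (algebraMap O F ϖ) := funext hα₀
  change Ubar = lowerUnipotentMaxIdeal O F at hUbar
  change K₀ = integralSL2 O F at hK₀
  subst hUbar hK₀ hM
  refine ⟨fun hx => ?_, fun hx hx2 => ?_, fun hx => ?_⟩
  · obtain ⟨u, rfl⟩ := hx
    simpa only [pow_zero, one_mul] using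
      upperTriangular_mem_of_eq_pow_mul_unit hϖm hp (n := n) (k := 0) (m := n + 2) zero_le_one
        (by simp) u
  · obtain ⟨u, rfl⟩ := exists_eq_mul_unit_of_notMem_sq hϖ.maximalIdeal_eq hx hx2
    simpa only [pow_one] using
      upperTriangular_mem_of_eq_pow_mul_unit hϖm hp (n := n) (k := 1) (m := n + 1) le_rfl
        (by push_cast; ring) u
  · obtain ⟨y, rfl⟩ : ϖ ^ 2 ∣ x := by
      rwa [hϖ.maximalIdeal_eq, Ideal.span_singleton_pow, Ideal.mem_span_singleton] at hx
    rw [map_mul, map_pow, upperTriangular_eq_diagZpow_mul hp, ← one_mul (diagZpow _ _ * _),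
      ← mul_assoc]
    exact Set.mul_mem_mul (Set.mul_mem_mul (one_mem_lowerUnipotentMaxIdeal O F) rfl)
      (unipotent_mem_integralSL2 O F y)
end

section
/- Let m ≥ 0 be an integer and x ∈ O, and set M = (ϖ^{−1}, ϖ^{−2m−1}·x; 0, ϖ) in SL₂(F). If x ∈ 𝔪^{2m} then M ∈ K₀·α₀·I(1); if x ∉ 𝔪^{2m} then there exists an integer l ≤ −2 such that M ∈ K₀·α₀^{l}·I(1), where α₀^l = diag(ϖ^{−l}, ϖ^{l}). -/
open Matrix Pointwise

/-!
Write `t` for the image of `ϖ` in `F`. If `x = ϖ^{2m} y` with `y ∈ O`, then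
`M = α₀ · (1 y; 0 1)` and the unipotent factor lies in `I(1)`. Otherwise `x = u ϖ^n` with `u` a
unit and `n < 2m`; putting `k = 2m - n - 1`, the upper right entry of `M` is `u t^{-(k+2)}` and
`M = (0 u; -u⁻¹ t^{k+3}) · α₀^{-(k+2)} · (1 0; u⁻¹ t^{k+1} 1)`,
where the first factor lies in `K₀` and the last in `Ū(𝔪) ⊆ I(1)` because `k + 1 ≥ 1`.
-/

section Field

variable {K : Type*} [Field K]

theorem zpow_neg_two_mul_sub_one_mul_pow {t : K} (ht : t ≠ 0) {m n : ℕ} (h : n ≤ 2 * m) :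
    t ^ (-(2 * (m : ℤ)) - 1) * t ^ n = (t ^ (2 * m - n + 1))⁻¹ := by
  rw [← zpow_natCast, ← zpow_add₀ ht, ← zpow_natCast, ← _root_.zpow_neg]
  congr 1
  omega

theorem upper_eq_diag_mul_upperUnipotent (t y : K) :
    !![t⁻¹, t⁻¹ * y; 0, t] = !![t⁻¹, 0; 0, t] * !![1, y; 0, 1] := by
  ext i j
  fin_cases i <;> fin_cases j <;> simp [Matrix.mul_apply]

theorem upper_eq_antidiag_mul_diag_mul_lowerUnipotent {t w : K} (ht : t ≠ 0) (hw : w ≠ 0)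
    (k : ℕ) :
    !![t⁻¹, w * (t ^ (k + 2))⁻¹; 0, t] =
      !![0, w; -w⁻¹, t ^ (k + 3)] * !![t ^ (k + 2), 0; 0, (t ^ (k + 2))⁻¹] *
        !![1, 0; w⁻¹ * t ^ (k + 1), 1] := by
  ext i j
  fin_cases i <;> fin_cases j <;> simp [Matrix.mul_apply] <;> field_simp <;> ring

end Field

namespace IsDiscreteValuationRing

variable {O : Type*} [CommRing O] [IsDomain O] [IsDiscreteValuationRing O] {ϖ : O}

theorem mem_maximalIdeal_pow_iff (hϖ : Irreducible ϖ) {x : O} {N : ℕ} :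
    x ∈ IsLocalRing.maximalIdeal O ^ N ↔ ϖ ^ N ∣ x := by
  rw [hϖ.maximalIdeal_eq, Ideal.span_singleton_pow, Ideal.mem_span_singleton]

theorem exists_eq_unit_mul_pow_of_notMem_maximalIdeal_pow (hϖ : Irreducible ϖ) {x : O} {N : ℕ}
    (hx : x ∉ IsLocalRing.maximalIdeal O ^ N) : ∃ (u : Oˣ) (n : ℕ), n < N ∧ x = u * ϖ ^ n := by
  have hx0 : x ≠ 0 := by rintro rfl; exact hx (zero_mem _)
  obtain ⟨n, u, rfl⟩ := eq_unit_mul_pow_irreducible hx0 hϖ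
  refine ⟨u, n, lt_of_not_ge fun hN => hx ?_, rfl⟩
  exact (mem_maximalIdeal_pow_iff hϖ).2 ((pow_dvd_pow ϖ hN).mul_left _)

end IsDiscreteValuationRing

section SL2

variable (O F : Type*) [CommRing O] [Field F] [Algebra O F]

def integralSL : Set (Matrix (Fin 2) (Fin 2) F) :=
  {M | M.det = 1 ∧ ∀ i j, ∃ a : O, M i j = algebraMap O F a}

variable {O F}

theorem fin_two_algebraMap_mem_integralSL {a b c d : O} (h : a * d - b * c = 1) :
    !![algebraMap O F a, algebraMap O F b; algebraMap O F c, algebraMap O F d] ∈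
      integralSL O F := by
  refine ⟨?_, fun i j => ?_⟩
  · rw [det_fin_two_of, ← map_mul, ← map_mul, ← map_sub, h, map_one]
  · fin_cases i <;> fin_cases j
    exacts [⟨a, rfl⟩, ⟨b, rfl⟩, ⟨c, rfl⟩, ⟨d, rfl⟩]

variable [IsLocalRing O]

variable (O F) in
def proPIwahori : Set (Matrix (Fin 2) (Fin 2) F) :=
  {M | ∃ a b c d : O,
    M = !![algebraMap O F a, algebraMap O F b; algebraMap O F c, algebraMap O F d] ∧
    a * d - b * c = 1 ∧
    a - 1 ∈ IsLocalRing.maximalIdeal O ∧ d - 1 ∈ IsLocalRing.maximalIdeal O ∧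
    c ∈ IsLocalRing.maximalIdeal O}

variable {ϖ : O}

theorem upper_mem_integralSL_mul_diag_mul_proPIwahori (y : O) :
    !![(algebraMap O F ϖ)⁻¹, (algebraMap O F ϖ)⁻¹ * algebraMap O F y; 0, algebraMap O F ϖ] ∈
      integralSL O F * {!![(algebraMap O F ϖ)⁻¹, 0; 0, algebraMap O F ϖ]} * proPIwahori O F := by
  have h1 : (1 : Matrix (Fin 2) (Fin 2) F) ∈ integralSL O F := by
    simpa [one_fin_two] using fin_two_algebraMap_mem_integralSL (F := F) (a := (1 : O)) (b := 0)
      (c := 0) (d := 1) (by ring)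
  rw [upper_eq_diag_mul_upperUnipotent]
  exact ⟨_, Set.mul_mem_mul h1 rfl, !![1, algebraMap O F y; 0, 1],
    ⟨1, y, 0, 1, by simp, by ring, by simp, by simp, by simp⟩, by rw [one_mul]⟩

theorem upper_mem_integralSL_mul_diag_mul_proPIwahori_of_unit [IsFractionRing O F]
    (hϖ : Irreducible ϖ) (u : Oˣ) (k : ℕ) :
    !![(algebraMap O F ϖ)⁻¹, algebraMap O F u * (algebraMap O F ϖ ^ (k + 2))⁻¹;
        0, algebraMap O F ϖ] ∈
      integralSL O F * {!![algebraMap O F ϖ ^ (k + 2), 0; 0, (algebraMap O F ϖ ^ (k + 2))⁻¹]} *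
        proPIwahori O F := by
  have ht : algebraMap O F ϖ ≠ 0 :=
    (map_ne_zero_iff _ (IsFractionRing.injective O F)).2 hϖ.ne_zero
  have hw : algebraMap O F u ≠ 0 :=
    (map_ne_zero_iff _ (IsFractionRing.injective O F)).2 u.ne_zero
  rw [upper_eq_antidiag_mul_diag_mul_lowerUnipotent ht hw k]
  refine Set.mul_mem_mul (Set.mul_mem_mul ?_ rfl)
    ⟨1, 0, ↑u⁻¹ * ϖ ^ (k + 1), 1, ?_, by ring, by simp, by simp, ?_⟩
  · simpa [map_units_inv] using fin_two_algebraMap_mem_integralSL (F := F) (a := 0) (b := ↑u)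
      (c := -↑u⁻¹) (d := ϖ ^ (k + 3)) (by simp)
  · simp [map_units_inv]
  · exact Ideal.mul_mem_left _ _ (Ideal.pow_mem_of_mem _
      ((IsLocalRing.mem_maximalIdeal _).2 hϖ.not_isUnit) _ k.succ_pos)

end SL2

open IsDiscreteValuationRing in
/-- For `m ≥ 0` and `x ∈ O`, set
`M = (ϖ^{−1}, ϖ^{−2m−1}·x; 0, ϖ)`. If `x ∈ 𝔪^{2m}` then `M ∈ K₀·α₀·I(1)`;
otherwise there is `l ≤ −2` with `M ∈ K₀·α₀^{l}·I(1)`, where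
`α₀^l = diag(ϖ^{−l}, ϖ^{l})`. -/
theorem stmt_15
    (O : Type*) [CommRing O] [IsDomain O] [IsDiscreteValuationRing O]
    (ϖ : O) (hϖ : Irreducible ϖ)
    (F : Type*) [Field F] [Algebra O F] [IsFractionRing O F]
    (m : ℕ) (x : O)
    (K₀ : Set (Matrix (Fin 2) (Fin 2) F))
    (hK₀ : K₀ = {M | M.det = 1 ∧ ∀ i j, ∃ a : O, M i j = algebraMap O F a})
    (I1 : Set (Matrix (Fin 2) (Fin 2) F))
    (hI1 : I1 = {M | ∃ a b c d : O,
        M = !![algebraMap O F a, algebraMap O F b; algebraMap O F c, algebraMap O F d] ∧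
        a * d - b * c = 1 ∧
        a - 1 ∈ IsLocalRing.maximalIdeal O ∧ d - 1 ∈ IsLocalRing.maximalIdeal O ∧
        c ∈ IsLocalRing.maximalIdeal O})
    (α₀ : ℤ → Matrix (Fin 2) (Fin 2) F)
    (hα₀ : ∀ l : ℤ, α₀ l = !![algebraMap O F ϖ ^ (-l), 0; 0, algebraMap O F ϖ ^ l])
    (M : Matrix (Fin 2) (Fin 2) F)
    (hM : M = !![(algebraMap O F ϖ)⁻¹,
          algebraMap O F ϖ ^ (-(2 * (m : ℤ)) - 1) * algebraMap O F x;
          0, algebraMap O F ϖ]) :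
    (x ∈ IsLocalRing.maximalIdeal O ^ (2 * m) → M ∈ K₀ * {α₀ 1} * I1) ∧
    (x ∉ IsLocalRing.maximalIdeal O ^ (2 * m) →
      ∃ l : ℤ, l ≤ -2 ∧ M ∈ K₀ * {α₀ l} * I1) := by
  have ht : algebraMap O F ϖ ≠ 0 :=
    (map_ne_zero_iff _ (IsFractionRing.injective O F)).2 hϖ.ne_zero
  subst hK₀ hI1 hM
  constructor
  · intro hx
    obtain ⟨y, rfl⟩ := (mem_maximalIdeal_pow_iff hϖ).1 hx
    rw [map_mul, map_pow, ← mul_assoc, zpow_neg_two_mul_sub_one_mul_pow ht le_rfl, Nat.sub_self,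
      zero_add, pow_one, hα₀, _root_.zpow_neg_one, zpow_one]
    exact upper_mem_integralSL_mul_diag_mul_proPIwahori (F := F) y
  · intro hx
    obtain ⟨u, n, hn, rfl⟩ := exists_eq_unit_mul_pow_of_notMem_maximalIdeal_pow hϖ hx
    obtain ⟨k, hk⟩ : ∃ k, 2 * m - n + 1 = k + 2 := ⟨2 * m - n - 1, by omega⟩
    refine ⟨-(k + 2 : ℕ), by omega, ?_⟩
    rw [map_mul, map_pow, mul_left_comm, zpow_neg_two_mul_sub_one_mul_pow ht hn.le, hk, hα₀,
      neg_neg, _root_.zpow_neg, zpow_natCast]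
    exact upper_mem_integralSL_mul_diag_mul_proPIwahori_of_unit (F := F) hϖ u k
end
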